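/- arXiv:2511.11813 — 7 statements merged into one kernel-verified Lean document; each statement's English description precedes it below -/
import Mathlib

section
/- Fix complex numbers x, x', y, y' and suppose X̃ = xI + 2yZ − X and X́ = x'I + 2y'Z − X are invertible. Let c ∈ ℂ and R > 0 be such that zI − Z is invertible for every z on the circle |z − c| = R. Then the circle integral ∮_{|z−c|=R} exp((x−x')z + (y−y')z²) · (1 + aᵀX̃⁻¹(zI−Z)⁻¹b) · (1 − aᵀ(zI−Z)⁻¹X́⁻¹b) dz equals 0. In particular, the product of a wave function from the adelic Grassmannian with its adjoint has zero residue at every pole in z. -/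
/-!
Write `G(z) = (zI - Z)⁻¹`, `X̃ = xI + 2yZ - X`, `X́ = x'I + 2y'Z - X` and
`E(z) = exp((x - x')z + (y - y')z²)`. Since `G` commutes with `Z` and `ZG = zG - 1`, the rank-one
condition gives `G b aᵀ G = XG - GX - G²`, and splitting `X` as `xI + 2yZ - X̃` on the left and as
`x'I + 2y'Z - X́` on the right turns the integrand into
`(1 + 2(y - y') aᵀX̃⁻¹X́⁻¹b) E(z) - d/dz (E(z) aᵀX̃⁻¹G(z)X́⁻¹b)`.
The first term is entire and the second is exact, so both integrate to zero over the circle.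
-/

open Matrix Metric

attribute [local instance] Matrix.linftyOpNormedRing Matrix.linftyOpNormedAlgebra

section Algebra

variable {R A : Type*} [CommRing R] [Ring A] [Algebra R A]

theorem mul_eq_smul_sub_one_of_smul_one_sub_mul_eq_one {Z G : A} {z : R}
    (h : (z • 1 - Z) * G = 1) : Z * G = z • G - 1 := by
  rw [← h]; simp only [sub_mul, smul_mul_assoc, one_mul]; abel

theorem mul_eq_smul_sub_one_of_mul_smul_one_sub_eq_one {Z G : A} {z : R}
    (h : G * (z • 1 - Z) = 1) : G * Z = z • G - 1 := by
  rw [← h]; simp only [mul_sub, mul_smul_comm, mul_one]; abel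

variable {X Z G : A} {z : R}

theorem mul_commutator_mul_eq_sub (hZG : Z * G = z • G - 1) (hGZ : G * Z = z • G - 1) :
    G * (X * Z - Z * X) * G = X * G - G * X := by
  calc G * (X * Z - Z * X) * G = G * X * (Z * G) - (G * Z) * X * G := by noncomm_ring
    _ = X * G - G * X := by
      rw [hZG, hGZ]
      simp only [mul_sub, sub_mul, mul_smul_comm, smul_mul_assoc, mul_one, one_mul, mul_assoc]
      abel

theorem mul_mul_commutator_sub_one_mul_mul {M M' : A} {x x' y y' : R}
    (hM : M * (x • 1 + (2 * y) • Z - X) = 1) (hM' : (x' • 1 + (2 * y') • Z - X) * M' = 1)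
    (hZG : Z * G = z • G - 1) (hGZ : G * Z = z • G - 1) :
    M * G * (X * Z - Z * X - 1) * G * M' =
      (x - x' + 2 * (y - y') * z) • (M * G * M') - (2 * (y - y')) • (M * M')
        + M * G - G * M' - M * G ^ 2 * M' := by
  set P := x • 1 + (2 * y) • Z - X
  set P' := x' • 1 + (2 * y') • Z - X
  -- expand `X` through `P` to the left of `G` and through `P'` to the right of it
  have hcomm : X * G - G * X =
      (x - x' + 2 * (y - y') * z) • G - (2 * (y - y')) • 1 - P * G + G * P' := by
    simp only [P, P', sub_mul, add_mul, mul_sub, mul_add, smul_mul_assoc, mul_smul_comm, one_mul,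
      mul_one, hZG, hGZ]
    module
  calc M * G * (X * Z - Z * X - 1) * G * M' = M * (G * (X * Z - Z * X) * G - G ^ 2) * M' := by
        noncomm_ring
    _ = _ := by
      rw [mul_commutator_mul_eq_sub hZG hGZ, hcomm]
      simp only [mul_sub, sub_mul, mul_add, add_mul, mul_smul_comm, smul_mul_assoc, mul_one,
        ← mul_assoc, hM]
      rw [mul_assoc _ P', hM']
      simp only [one_mul, mul_one]
      abel

end Algebra

namespace Matrix

section RankOne

variable {l m R : Type*} [Fintype l] [Fintype m] [CommRing R]

theorem dotProduct_mulVec_mul_dotProduct_mulVec (a : l → R) (b : m → R) (P Q : Matrix l m R) :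
    (a ⬝ᵥ P *ᵥ b) * (a ⬝ᵥ Q *ᵥ b) = a ⬝ᵥ (P * vecMulVec b a * Q) *ᵥ b := by
  rw [mul_vecMulVec, vecMulVec_mul, vecMulVec_mulVec]
  simp only [op_smul_eq_smul, dotProduct_smul, smul_eq_mul, dotProduct_mulVec, mul_comm]

end RankOne

variable {n : Type*} [Fintype n] [DecidableEq n]

theorem one_add_dotProduct_mulVec_mul_one_sub_dotProduct_mulVec {R : Type*} [CommRing R]
    {X Z G M M' : Matrix n n R} {a b : n → R} (hrank : X * Z - Z * X - 1 = vecMulVec b a)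
    {x x' y y' z : R}
    (hM : M * (x • 1 + (2 * y) • Z - X) = 1) (hM' : (x' • 1 + (2 * y') • Z - X) * M' = 1)
    (hG₁ : (z • 1 - Z) * G = 1) (hG₂ : G * (z • 1 - Z) = 1) :
    (1 + a ⬝ᵥ (M * G) *ᵥ b) * (1 - a ⬝ᵥ (G * M') *ᵥ b) =
      1 + 2 * (y - y') * (a ⬝ᵥ (M * M') *ᵥ b)
        - (x - x' + 2 * (y - y') * z) * (a ⬝ᵥ (M * G * M') *ᵥ b)
        + a ⬝ᵥ (M * G ^ 2 * M') *ᵥ b := by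
  have h := dotProduct_mulVec_mul_dotProduct_mulVec a b (M * G) (G * M')
  rw [← hrank, ← mul_assoc, mul_mul_commutator_sub_one_mul_mul hM hM'
    (mul_eq_smul_sub_one_of_smul_one_sub_mul_eq_one hG₁)
    (mul_eq_smul_sub_one_of_mul_smul_one_sub_eq_one hG₂)] at h
  simp only [sub_mulVec, add_mulVec, smul_mulVec, dotProduct_sub, dotProduct_add,
    dotProduct_smul, smul_eq_mul] at h
  linear_combination -h

variable {𝕜 : Type*} [NontriviallyNormedField 𝕜] [CompleteSpace 𝕜]

theorem hasDerivAt_inv_smul_one_sub {Z : Matrix n n 𝕜} {z : 𝕜} (hz : IsUnit (z • 1 - Z)) :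
    HasDerivAt (fun w : 𝕜 => (w • 1 - Z)⁻¹) (-(z • 1 - Z)⁻¹ ^ 2) z := by
  have h : ∀ w : 𝕜, (w • 1 - Z)⁻¹ = resolvent Z w := fun w => by
    rw [resolvent, Algebra.algebraMap_eq_smul_one, nonsing_inv_eq_ringInverse]
  -- `FiniteDimensional.complete` produces the product uniformity, not the norm's
  have : @CompleteSpace (Matrix n n 𝕜) PseudoMetricSpace.toUniformSpace :=
    FiniteDimensional.complete 𝕜 _
  simp only [h]
  exact spectrum.hasDerivAt_resolvent_const_left
    (by rwa [spectrum.mem_resolventSet_iff, Algebra.algebraMap_eq_smul_one])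

theorem hasDerivAt_dotProduct_mul_inv_smul_one_sub_mul_mulVec (a b : n → 𝕜)
    (M M' : Matrix n n 𝕜) {Z : Matrix n n 𝕜} {z : 𝕜} (hz : IsUnit (z • 1 - Z)) :
    HasDerivAt (fun w : 𝕜 => a ⬝ᵥ (M * (w • 1 - Z)⁻¹ * M') *ᵥ b)
      (-(a ⬝ᵥ (M * (z • 1 - Z)⁻¹ ^ 2 * M') *ᵥ b)) z := by
  let φ : Matrix n n 𝕜 →L[𝕜] 𝕜 := LinearMap.toContinuousLinearMap
    { toFun := fun P => a ⬝ᵥ P *ᵥ b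
      map_add' := fun P Q => by rw [add_mulVec, dotProduct_add]
      map_smul' := fun r P => by rw [smul_mulVec, dotProduct_smul]; rfl }
  refine (φ.hasFDerivAt.comp_hasDerivAt z
    (((hasDerivAt_inv_smul_one_sub hz).const_mul M).mul_const M')).congr_deriv ?_
  change a ⬝ᵥ (M * -(z • 1 - Z)⁻¹ ^ 2 * M') *ᵥ b = _
  rw [mul_neg, neg_mul, neg_mulVec, dotProduct_neg]

end Matrix

theorem Complex.hasDerivAt_exp_mul_add_mul_sq (p q z : ℂ) :
    HasDerivAt (fun w => Complex.exp (p * w + q * w ^ 2))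
      (Complex.exp (p * z + q * z ^ 2) * (p + 2 * q * z)) z := by
  refine HasDerivAt.cexp ((((hasDerivAt_id' z).const_mul p).add
    ((hasDerivAt_pow 2 z).const_mul q)).congr_deriv ?_)
  push_cast
  ring

theorem circleIntegral_sub_eq_zero_of_differentiable_of_hasDerivAt {E : Type*}
    [NormedAddCommGroup E] [NormedSpace ℂ E] [CompleteSpace E] {g F F' : ℂ → E} {c : ℂ} {R : ℝ}
    (hR : 0 ≤ R) (hg : Differentiable ℂ g) (hF : ∀ z ∈ sphere c R, HasDerivAt F (F' z) z) :
    (∮ z in C(c, R), (g z - F' z)) = 0 := by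
  have hgi : CircleIntegrable g c R := hg.continuous.continuousOn.circleIntegrable hR
  by_cases hF'i : CircleIntegrable F' c R
  · rw [circleIntegral.integral_sub hgi hF'i, hg.diffContOnCl.circleIntegral_eq_zero hR,
      circleIntegral.integral_eq_zero_of_hasDerivWithinAt hR
        fun z hz => (hF z hz).hasDerivWithinAt, sub_zero]
  · exact circleIntegral.integral_undef fun h => hF'i (by convert hgi.sub h using 1; ext; simp)

theorem circleIntegral_wave_adjoint_product_eq_zero_general {N : ℕ}
    (X Z : Matrix (Fin N) (Fin N) ℂ) (a b : Fin N → ℂ)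
    (hrank : X * Z - Z * X - 1 = Matrix.vecMulVec b a)
    (x x' y y' : ℂ)
    (hX1 : IsUnit (x • (1 : Matrix (Fin N) (Fin N) ℂ) + (2 * y) • Z - X))
    (hX2 : IsUnit (x' • (1 : Matrix (Fin N) (Fin N) ℂ) + (2 * y') • Z - X))
    (c : ℂ) (R : ℝ) (hR : 0 < R)
    (hZ : ∀ z : ℂ, ‖z - c‖ = R → IsUnit (z • (1 : Matrix (Fin N) (Fin N) ℂ) - Z)) :
    (∮ z in C(c, R),
      Complex.exp ((x - x') * z + (y - y') * z ^ 2) *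
        (1 + a ⬝ᵥ ((x • (1 : Matrix (Fin N) (Fin N) ℂ) + (2 * y) • Z - X)⁻¹
            * (z • 1 - Z)⁻¹).mulVec b) *
        (1 - a ⬝ᵥ ((z • (1 : Matrix (Fin N) (Fin N) ℂ) - Z)⁻¹
            * (x' • 1 + (2 * y') • Z - X)⁻¹).mulVec b)) = 0 := by
  set M := (x • (1 : Matrix (Fin N) (Fin N) ℂ) + (2 * y) • Z - X)⁻¹
  set M' := (x' • (1 : Matrix (Fin N) (Fin N) ℂ) + (2 * y') • Z - X)⁻¹
  have hM := nonsing_inv_mul _ ((isUnit_iff_isUnit_det _).mp hX1)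
  have hM' := mul_nonsing_inv _ ((isUnit_iff_isUnit_det _).mp hX2)
  refine (circleIntegral.integral_congr hR.le fun z hz => ?_).trans <|
    circleIntegral_sub_eq_zero_of_differentiable_of_hasDerivAt hR.le
      (g := fun z => (1 + 2 * (y - y') * (a ⬝ᵥ (M * M') *ᵥ b)) *
        Complex.exp ((x - x') * z + (y - y') * z ^ 2)) (by fun_prop)
      fun z hz => (Complex.hasDerivAt_exp_mul_add_mul_sq (x - x') (y - y') z).mul <|
        hasDerivAt_dotProduct_mul_inv_smul_one_sub_mul_mulVec a b M M'
          (hZ z (mem_sphere_iff_norm.mp hz))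
  have hdet := (isUnit_iff_isUnit_det _).mp (hZ z (mem_sphere_iff_norm.mp hz))
  rw [mul_assoc, one_add_dotProduct_mulVec_mul_one_sub_dotProduct_mulVec hrank hM hM'
    (mul_nonsing_inv _ hdet) (nonsing_inv_mul _ hdet)]
  ring

/-- The product of a wave function from the adelic Grassmannian with its adjoint,
`ψ_𝒳(x,y,z)·ψ_{𝒳*}(x',−y',−z)`, has vanishing integral over any circle avoiding the
eigenvalues of `Z`; in particular it has zero residue at every pole in `z`. -/
theorem circleIntegral_wave_adjoint_product_eq_zero {N : ℕ} (hN : 0 < N)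
    (X Z : Matrix (Fin N) (Fin N) ℂ) (a b : Fin N → ℂ)
    (hrank : X * Z - Z * X - 1 = Matrix.vecMulVec b a)
    (x x' y y' : ℂ)
    (hX1 : IsUnit (x • (1 : Matrix (Fin N) (Fin N) ℂ) + (2 * y) • Z - X))
    (hX2 : IsUnit (x' • (1 : Matrix (Fin N) (Fin N) ℂ) + (2 * y') • Z - X))
    (c : ℂ) (R : ℝ) (hR : 0 < R)
    (hZ : ∀ z : ℂ, ‖z - c‖ = R → IsUnit (z • (1 : Matrix (Fin N) (Fin N) ℂ) - Z)) :
    (∮ z in C(c, R),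
      Complex.exp ((x - x') * z + (y - y') * z ^ 2) *
        (1 + a ⬝ᵥ ((x • (1 : Matrix (Fin N) (Fin N) ℂ) + (2 * y) • Z - X)⁻¹
            * (z • 1 - Z)⁻¹).mulVec b) *
        (1 - a ⬝ᵥ ((z • (1 : Matrix (Fin N) (Fin N) ℂ) - Z)⁻¹
            * (x' • 1 + (2 * y') • Z - X)⁻¹).mulVec b)) = 0 :=
  circleIntegral_wave_adjoint_product_eq_zero_general X Z a b hrank x x' y y' hX1 hX2 c R hR hZ
end

section
/- Fix complex numbers y, y', w, z and suppose Ź = wI + (1−4yy')Z + 2y'X and Z̃ = zI − Z are invertible. Let μ̃ : ℂ → ℂ be any function whose complex derivative at every point x is exp((w+z)x + (w²+z²)y + y'x²). Define F̃(x) = μ̃(x)·(1 − 2y'·aᵀŹ⁻¹Z̃⁻¹b) + exp((w+z)x + (w²+z²)y + y'x²)·aᵀŹ⁻¹(xI+2yZ−X)⁻¹Z̃⁻¹b. Then at every complex x for which xI + 2yZ − X is invertible, F̃ has complex derivative equal to exp((w+z)x + (w²+z²)y + y'x²) · (1 + aᵀŹ⁻¹(xI+2yZ−X)⁻¹b) ·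 (1 + aᵀ(xI+2yZ−X)⁻¹Z̃⁻¹b), which is the product ψ*_𝒳(x,y,y',w)·ψ_𝒳(x,y,z)·e^{y'x²} of the x-adjoint wave function, the wave function, and the weight e^{y'x²}. -/
open Matrix

/-! Write `Ź = wI + (1−4yy')Z + 2y'X`, `Z̃ = zI − Z`, `X̃ = xI + 2yZ − X` and `E` for the
exponential. Since `μ̃' = E`, `E' = (w+z+2y'x)·E` and `(X̃⁻¹)' = −X̃⁻²`, the claim reduces to
`(w+z+2y'x)·aᵀŹ⁻¹X̃⁻¹Z̃⁻¹b − 2y'·aᵀŹ⁻¹Z̃⁻¹b − aᵀŹ⁻¹X̃⁻²Z̃⁻¹b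
  = aᵀŹ⁻¹X̃⁻¹b + aᵀX̃⁻¹Z̃⁻¹b + (aᵀŹ⁻¹X̃⁻¹b)(aᵀX̃⁻¹Z̃⁻¹b)`.
This comes from two matrix facts: `Ź + Z̃ + 2y'X̃ = (w+z+2y'x)I`, and `[Ź, X̃] = [X, Z] = I + baᵀ`,
so that `X̃⁻¹Ź − ŹX̃⁻¹ = X̃⁻¹(I + baᵀ)X̃⁻¹`. The rank-one term `baᵀ` is what splits
`aᵀŹ⁻¹X̃⁻¹baᵀX̃⁻¹Z̃⁻¹b` into the product of the two wave-function corrections. -/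

section CommutatorAlgebra

variable {𝕜 A : Type*} [CommRing 𝕜] [Ring A] [Algebra 𝕜 A]

theorem commutator_smul_one_add_smul_add_smul (w x α β γ : 𝕜) (X Z : A) :
    (w • 1 + α • Z + β • X) * (x • 1 + γ • Z - X)
        - (x • 1 + γ • Z - X) * (w • 1 + α • Z + β • X)
      = (α + β * γ) • (X * Z - Z * X) := by
  simp only [add_mul, mul_add, sub_mul, mul_sub, smul_mul_assoc, mul_smul_comm, one_mul, mul_one]
  module

theorem mul_sub_mul_eq_of_mul_eq_one {p u r : A} (hru : r * u = 1) (hur : u * r = 1) :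
    r * p - p * r = r * (p * u - u * p) * r := by
  calc r * p - p * r = r * p * (u * r) - (r * u) * p * r := by rw [hur, hru, mul_one, one_mul]
    _ = r * (p * u - u * p) * r := by noncomm_ring

theorem resolvent_commutator_identity {Zp Zt Xt p q r V : A} {s c : 𝕜}
    (hp : p * Zp = 1) (hq : Zt * q = 1) (hr : r * Xt = 1) (hr' : Xt * r = 1)
    (hsum : Zp + Zt + c • Xt = s • 1) (hcomm : Zp * Xt - Xt * Zp = 1 + V) :
    s • (p * r * q) - c • (p * q) - p * r * r * q = p * r + r * q + p * r * V * (r * q) := by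
  have hrZp : r * Zp = r * r + r * V * r + Zp * r := by
    rw [← sub_eq_iff_eq_add, mul_sub_mul_eq_of_mul_eq_one hr hr', hcomm]; noncomm_ring
  calc s • (p * r * q) - c • (p * q) - p * r * r * q
      = p * r * (Zp + Zt + c • Xt) * q - c • (p * q) - p * r * r * q := by
        rw [hsum, mul_smul_comm, mul_one, smul_mul_assoc]
    _ = p * (r * Zp) * q + p * r * (Zt * q) + c • (p * (r * Xt) * q) - c • (p * q)
          - p * r * r * q := by
        simp only [mul_add, add_mul, mul_smul_comm, smul_mul_assoc, mul_assoc]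
    _ = p * r + r * q + p * r * V * (r * q) := by
        rw [hrZp, hq, hr]
        simp only [mul_add, add_mul, mul_assoc, mul_one]
        rw [← mul_assoc p Zp, hp, one_mul]
        abel

end CommutatorAlgebra

theorem dotProduct_mul_vecMulVec_mul_mulVec {n R : Type*} [Fintype n] [CommSemiring R]
    (M K : Matrix n n R) (a b : n → R) :
    a ⬝ᵥ (M * vecMulVec b a * K) *ᵥ b = (a ⬝ᵥ M *ᵥ b) * (a ⬝ᵥ K *ᵥ b) := by
  rw [← mulVec_mulVec, ← mulVec_mulVec, vecMulVec_mulVec, op_smul_eq_smul, mulVec_smul,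
    dotProduct_smul, smul_eq_mul, mul_comm]

theorem hasDerivAt_cexp_quadratic (α β γ x : ℂ) :
    HasDerivAt (fun ξ => Complex.exp (α * ξ + β + γ * ξ ^ 2))
      (Complex.exp (α * x + β + γ * x ^ 2) * (α + γ * (2 * x))) x := by
  have hpoly : HasDerivAt (fun ξ : ℂ => α * ξ + β + γ * ξ ^ 2)
      (α * 1 + γ * (↑2 * x ^ (2 - 1))) x :=
    (((hasDerivAt_id' x).const_mul α).add_const β).add ((hasDerivAt_pow 2 x).const_mul γ)
  simpa using hpoly.cexp

section MatrixResolvent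

attribute [local instance] Matrix.linftyOpNormedAddCommGroup Matrix.linftyOpNormedRing
  Matrix.linftyOpNormedAlgebra

variable {𝕜 n : Type*} [RCLike 𝕜] [Fintype n] [DecidableEq n]

theorem Matrix.hasDerivAt_inv_smul_one_sub_s5 {M : Matrix n n 𝕜} {x : 𝕜} (hx : IsUnit (x • 1 - M)) :
    HasDerivAt (fun ξ : 𝕜 => (ξ • 1 - M)⁻¹) (-(x • 1 - M)⁻¹ ^ 2) x := by
  have h := spectrum.hasDerivAt_resolvent_const_left (a := M) (k := x)
    (spectrum.mem_resolventSet_iff.mpr (by rwa [Algebra.algebraMap_eq_smul_one]))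
  have e : resolvent M = fun ξ : 𝕜 => (ξ • 1 - M)⁻¹ := by
    ext1 ξ
    simp only [resolvent, Algebra.algebraMap_eq_smul_one, ← nonsing_inv_eq_ringInverse]
  rwa [e] at h

theorem Matrix.hasDerivAt_dotProduct_mul_inv_mul_mulVec (u v : n → 𝕜) (P Q : Matrix n n 𝕜)
    {M : Matrix n n 𝕜} {x : 𝕜} (hx : IsUnit (x • 1 - M)) :
    HasDerivAt (fun ξ : 𝕜 => u ⬝ᵥ (P * (ξ • 1 - M)⁻¹ * Q) *ᵥ v)
      (-(u ⬝ᵥ (P * (x • 1 - M)⁻¹ * (x • 1 - M)⁻¹ * Q) *ᵥ v)) x := by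
  let L : Matrix n n 𝕜 →ₗ[𝕜] 𝕜 :=
    { toFun K := u ⬝ᵥ K *ᵥ v
      map_add' K K' := by simp only [add_mulVec, dotProduct_add]
      map_smul' c K := by simp only [smul_mulVec, dotProduct_smul, RingHom.id_apply] }
  have h : HasDerivAt (fun ξ => L (P * (ξ • 1 - M)⁻¹ * Q)) (L (P * -(x • 1 - M)⁻¹ ^ 2 * Q)) x :=
    L.toContinuousLinearMap.hasFDerivAt.comp_hasDerivAt x
      (((hasDerivAt_inv_smul_one_sub_s5 hx).const_mul P).mul_const Q)
  simpa [L, sq, mul_assoc, neg_mulVec] using h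

end MatrixResolvent

theorem antiderivative_wave_xadjoint_product_general {N : ℕ}
    (X Z : Matrix (Fin N) (Fin N) ℂ) (a b : Fin N → ℂ)
    (hrank : X * Z - Z * X - 1 = Matrix.vecMulVec b a)
    (y y' w z : ℂ)
    (hZ1 : IsUnit (w • (1 : Matrix (Fin N) (Fin N) ℂ) + (1 - 4 * y * y') • Z + (2 * y') • X))
    (hZ2 : IsUnit (z • (1 : Matrix (Fin N) (Fin N) ℂ) - Z))
    (μ : ℂ → ℂ)
    (hμ : ∀ x : ℂ, HasDerivAt μ
      (Complex.exp ((w + z) * x + (w ^ 2 + z ^ 2) * y + y' * x ^ 2)) x) :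
    ∀ x : ℂ, IsUnit (x • (1 : Matrix (Fin N) (Fin N) ℂ) + (2 * y) • Z - X) →
      HasDerivAt
        (fun ξ : ℂ =>
          μ ξ * (1 - 2 * y' *
              (a ⬝ᵥ ((w • (1 : Matrix (Fin N) (Fin N) ℂ) + (1 - 4 * y * y') • Z + (2 * y') • X)⁻¹
                * (z • 1 - Z)⁻¹).mulVec b))
          + Complex.exp ((w + z) * ξ + (w ^ 2 + z ^ 2) * y + y' * ξ ^ 2) *
              (a ⬝ᵥ ((w • (1 : Matrix (Fin N) (Fin N) ℂ) + (1 - 4 * y * y') • Z + (2 * y') • X)⁻¹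
                * (ξ • 1 + (2 * y) • Z - X)⁻¹ * (z • 1 - Z)⁻¹).mulVec b))
        (Complex.exp ((w + z) * x + (w ^ 2 + z ^ 2) * y + y' * x ^ 2) *
          (1 + a ⬝ᵥ ((w • (1 : Matrix (Fin N) (Fin N) ℂ) + (1 - 4 * y * y') • Z + (2 * y') • X)⁻¹
              * (x • 1 + (2 * y) • Z - X)⁻¹).mulVec b) *
          (1 + a ⬝ᵥ ((x • (1 : Matrix (Fin N) (Fin N) ℂ) + (2 * y) • Z - X)⁻¹
              * (z • 1 - Z)⁻¹).mulVec b))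
        x := by
  intro x hx
  set Zp := w • (1 : Matrix (Fin N) (Fin N) ℂ) + (1 - 4 * y * y') • Z + (2 * y') • X
  set Zt := z • (1 : Matrix (Fin N) (Fin N) ℂ) - Z
  have hXt (ξ : ℂ) : ξ • (1 : Matrix (Fin N) (Fin N) ℂ) + (2 * y) • Z - X
      = ξ • 1 - (X - (2 * y) • Z) := (sub_sub_eq_add_sub ..).symm
  have hsum : Zp + Zt + (2 * y') • (x • 1 - (X - (2 * y) • Z)) = ((w + z) + y' * (2 * x)) • 1 := by
    module
  have hcomm : Zp * (x • 1 - (X - (2 * y) • Z)) - (x • 1 - (X - (2 * y) • Z)) * Zp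
      = 1 + vecMulVec b a := by
    rw [← hXt, commutator_smul_one_add_smul_add_smul, ← hrank,
      show 1 - 4 * y * y' + 2 * y' * (2 * y) = 1 by ring, one_smul]
    abel
  simp only [hXt] at hx ⊢
  have hXt_det := (isUnit_iff_isUnit_det _).mp hx
  have hmatrix := resolvent_commutator_identity
    (nonsing_inv_mul Zp ((isUnit_iff_isUnit_det _).mp hZ1))
    (mul_nonsing_inv Zt ((isUnit_iff_isUnit_det _).mp hZ2))
    (nonsing_inv_mul _ hXt_det) (mul_nonsing_inv _ hXt_det) hsum hcomm
  have hscalar := congrArg (fun K => a ⬝ᵥ K *ᵥ b) hmatrix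
  simp only [add_mulVec, sub_mulVec, smul_mulVec, dotProduct_add, dotProduct_sub, dotProduct_smul,
    smul_eq_mul, dotProduct_mul_vecMulVec_mul_mulVec] at hscalar
  have hF := ((hμ x).mul_const (1 - 2 * y' * (a ⬝ᵥ (Zp⁻¹ * Zt⁻¹) *ᵥ b))).fun_add
    ((hasDerivAt_cexp_quadratic (w + z) ((w ^ 2 + z ^ 2) * y) y' x).fun_mul
    (hasDerivAt_dotProduct_mul_inv_mul_mulVec a b Zp⁻¹ Zt⁻¹ hx))
  refine hF.congr_deriv ?_
  linear_combination Complex.exp ((w + z) * x + (w ^ 2 + z ^ 2) * y + y' * x ^ 2) * hscalar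

/-- The explicit function
`F̃(x) = μ̃(x)·(1 − 2y'·aᵀŹ⁻¹Z̃⁻¹b) + exp((w+z)x+(w²+z²)y+y'x²)·aᵀŹ⁻¹X̃⁻¹Z̃⁻¹b`
is an antiderivative in `x` of the product `ψ*_𝒳(x,y,y',w)·ψ_𝒳(x,y,z)·e^{y'x²}`
of the x-adjoint wave function, the wave function, and the weight, at every `x`
where `xI + 2yZ − X` is invertible. -/
theorem antiderivative_wave_xadjoint_product {N : ℕ} (hN : 0 < N)
    (X Z : Matrix (Fin N) (Fin N) ℂ) (a b : Fin N → ℂ)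
    (hrank : X * Z - Z * X - 1 = Matrix.vecMulVec b a)
    (y y' w z : ℂ)
    (hZ1 : IsUnit (w • (1 : Matrix (Fin N) (Fin N) ℂ) + (1 - 4 * y * y') • Z + (2 * y') • X))
    (hZ2 : IsUnit (z • (1 : Matrix (Fin N) (Fin N) ℂ) - Z))
    (μ : ℂ → ℂ)
    (hμ : ∀ x : ℂ, HasDerivAt μ
      (Complex.exp ((w + z) * x + (w ^ 2 + z ^ 2) * y + y' * x ^ 2)) x) :
    ∀ x : ℂ, IsUnit (x • (1 : Matrix (Fin N) (Fin N) ℂ) + (2 * y) • Z - X) →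
      HasDerivAt
        (fun ξ : ℂ =>
          μ ξ * (1 - 2 * y' *
              (a ⬝ᵥ ((w • (1 : Matrix (Fin N) (Fin N) ℂ) + (1 - 4 * y * y') • Z + (2 * y') • X)⁻¹
                * (z • 1 - Z)⁻¹).mulVec b))
          + Complex.exp ((w + z) * ξ + (w ^ 2 + z ^ 2) * y + y' * ξ ^ 2) *
              (a ⬝ᵥ ((w • (1 : Matrix (Fin N) (Fin N) ℂ) + (1 - 4 * y * y') • Z + (2 * y') • X)⁻¹
                * (ξ • 1 + (2 * y) • Z - X)⁻¹ * (z • 1 - Z)⁻¹).mulVec b))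
        (Complex.exp ((w + z) * x + (w ^ 2 + z ^ 2) * y + y' * x ^ 2) *
          (1 + a ⬝ᵥ ((w • (1 : Matrix (Fin N) (Fin N) ℂ) + (1 - 4 * y * y') • Z + (2 * y') • X)⁻¹
              * (x • 1 + (2 * y) • Z - X)⁻¹).mulVec b) *
          (1 + a ⬝ᵥ ((x • (1 : Matrix (Fin N) (Fin N) ℂ) + (2 * y) • Z - X)⁻¹
              * (z • 1 - Z)⁻¹).mulVec b))
        x :=
  antiderivative_wave_xadjoint_product_general X Z a b hrank y y' w z hZ1 hZ2 μ hμ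
end

section
/- Fix complex numbers x, y, y', w, z and suppose the matrices X̃ = xI + 2yZ − X, Z̃ = zI − Z, and Ź = wI + (1−4yy')Z + 2y'X are all invertible. Then under the rank-one condition, (1 + aᵀŹ⁻¹X̃⁻¹b)·(1 + aᵀX̃⁻¹Z̃⁻¹b) = 1 + aᵀŹ⁻¹·((w+z+2xy')·X̃⁻¹ − 2y'·I − X̃⁻²)·Z̃⁻¹b. -/
/-!
Write `X̃, Z̃, Ź` for the three shifted matrices. Shifting `X` and `Z` by multiples of `1` and `Z`
does not change their commutator, so `X̃ Z̃ - Z̃ X̃ - 1 = b aᵀ` as well. Because `b aᵀ` has rank one,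
the product of the two scalars `1 + aᵀ M b` and `1 + aᵀ P b` is `1 + aᵀ (M + P + M b aᵀ P) b`.
With `M = Ź⁻¹ X̃⁻¹` and `P = X̃⁻¹ Z̃⁻¹` the middle matrix collapses, after cancelling
`X̃⁻¹ X̃` and `Z̃ Z̃⁻¹`, to `Ź⁻¹ ((Ź + Z̃) X̃⁻¹ - X̃⁻²) Z̃⁻¹`, and `Ź + Z̃ = (w + z + 2xy') - 2y' X̃`.
-/

open Matrix

theorem commutator_smul_one_add_smul_sub_smul_one_sub {R A : Type*} [CommRing R] [Ring A]
    [Algebra R A] (X Z : A) (x c z : R) :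
    (x • 1 + c • Z - X) * (z • 1 - Z) - (z • 1 - Z) * (x • 1 + c • Z - X) = X * Z - Z * X := by
  simp only [mul_sub, sub_mul, add_mul, mul_add, smul_mul_assoc, mul_smul_comm,
    one_mul, mul_one]
  module

section

variable {n R : Type*} [Fintype n] [CommRing R]

theorem Matrix.one_add_dotProduct_mulVec_mul_one_add_dotProduct_mulVec (a b : n → R)
    (M P : Matrix n n R) :
    (1 + a ⬝ᵥ M *ᵥ b) * (1 + a ⬝ᵥ P *ᵥ b) = 1 + a ⬝ᵥ (M + P + M * vecMulVec b a * P) *ᵥ b := by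
  have hprod : (a ⬝ᵥ M *ᵥ b) * (a ⬝ᵥ P *ᵥ b) = a ⬝ᵥ (M * vecMulVec b a * P) *ᵥ b := by
    rw [← mulVec_mulVec, ← mulVec_mulVec, vecMulVec_mulVec, op_smul_eq_smul, mulVec_smul,
      dotProduct_smul, smul_eq_mul, mul_comm]
  rw [add_mulVec, add_mulVec, dotProduct_add, dotProduct_add, ← hprod]
  ring

theorem Matrix.inv_mul_inv_add_inv_mul_inv_add_mul_commutator_mul [DecidableEq n]
    {A B C : Matrix n n R} (hA : IsUnit A) (hB : IsUnit B) (hC : IsUnit C) :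
    C⁻¹ * A⁻¹ + A⁻¹ * B⁻¹ + C⁻¹ * A⁻¹ * (A * B - B * A - 1) * (A⁻¹ * B⁻¹)
      = C⁻¹ * ((C + B) * A⁻¹ - A⁻¹ * A⁻¹) * B⁻¹ := by
  rw [isUnit_iff_isUnit_det] at hA hB hC
  simp only [Matrix.mul_sub, Matrix.sub_mul, Matrix.mul_add, Matrix.add_mul, Matrix.mul_one,
    Matrix.mul_assoc, nonsing_inv_mul_cancel_left _ _ hA, mul_nonsing_inv_cancel_left _ _ hA,
    mul_nonsing_inv _ hB, nonsing_inv_mul_cancel_left _ _ hC]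
  abel

end

theorem rank_one_scalar_product_identity_general {N : ℕ}
    (X Z : Matrix (Fin N) (Fin N) ℂ) (a b : Fin N → ℂ)
    (hrank : X * Z - Z * X - 1 = Matrix.vecMulVec b a)
    (x y y' w z : ℂ)
    (hX : IsUnit (x • (1 : Matrix (Fin N) (Fin N) ℂ) + (2 * y) • Z - X))
    (hZt : IsUnit (z • (1 : Matrix (Fin N) (Fin N) ℂ) - Z))
    (hZa : IsUnit (w • (1 : Matrix (Fin N) (Fin N) ℂ) + (1 - 4 * y * y') • Z + (2 * y') • X)) :
    (1 + a ⬝ᵥ ((w • (1 : Matrix (Fin N) (Fin N) ℂ) + (1 - 4 * y * y') • Z + (2 * y') • X)⁻¹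
        * (x • 1 + (2 * y) • Z - X)⁻¹).mulVec b) *
    (1 + a ⬝ᵥ ((x • (1 : Matrix (Fin N) (Fin N) ℂ) + (2 * y) • Z - X)⁻¹
        * (z • 1 - Z)⁻¹).mulVec b)
    = 1 + a ⬝ᵥ ((w • (1 : Matrix (Fin N) (Fin N) ℂ) + (1 - 4 * y * y') • Z + (2 * y') • X)⁻¹
        * ((w + z + 2 * x * y') • (x • (1 : Matrix (Fin N) (Fin N) ℂ) + (2 * y) • Z - X)⁻¹
            - (2 * y') • 1
            - (x • (1 : Matrix (Fin N) (Fin N) ℂ) + (2 * y) • Z - X)⁻¹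
              * (x • 1 + (2 * y) • Z - X)⁻¹)
        * (z • 1 - Z)⁻¹).mulVec b := by
  set Xt : Matrix (Fin N) (Fin N) ℂ := x • 1 + (2 * y) • Z - X
  set Zt : Matrix (Fin N) (Fin N) ℂ := z • 1 - Z
  set Za : Matrix (Fin N) (Fin N) ℂ := w • 1 + (1 - 4 * y * y') • Z + (2 * y') • X
  have hcomm : Xt * Zt - Zt * Xt - 1 = vecMulVec b a := by
    rw [commutator_smul_one_add_smul_sub_smul_one_sub, hrank]
  have hsum : Za + Zt = (w + z + 2 * x * y') • 1 - (2 * y') • Xt := by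
    simp only [Za, Zt, Xt]
    module
  have hXinv : Xt * Xt⁻¹ = 1 := mul_nonsing_inv _ ((isUnit_iff_isUnit_det _).1 hX)
  rw [one_add_dotProduct_mulVec_mul_one_add_dotProduct_mulVec, ← hcomm,
    inv_mul_inv_add_inv_mul_inv_add_mul_commutator_mul hX hZt hZa, hsum, Matrix.sub_mul,
    smul_mul, smul_mul, Matrix.one_mul, hXinv]

/-- The key algebraic identity under the rank-one condition:
`(1 + aᵀŹ⁻¹X̃⁻¹b)·(1 + aᵀX̃⁻¹Z̃⁻¹b) = 1 + aᵀŹ⁻¹·((w+z+2xy')·X̃⁻¹ − 2y'·I − X̃⁻²)·Z̃⁻¹b`. -/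
theorem rank_one_scalar_product_identity {N : ℕ} (hN : 0 < N)
    (X Z : Matrix (Fin N) (Fin N) ℂ) (a b : Fin N → ℂ)
    (hrank : X * Z - Z * X - 1 = Matrix.vecMulVec b a)
    (x y y' w z : ℂ)
    (hX : IsUnit (x • (1 : Matrix (Fin N) (Fin N) ℂ) + (2 * y) • Z - X))
    (hZt : IsUnit (z • (1 : Matrix (Fin N) (Fin N) ℂ) - Z))
    (hZa : IsUnit (w • (1 : Matrix (Fin N) (Fin N) ℂ) + (1 - 4 * y * y') • Z + (2 * y') • X)) :
    (1 + a ⬝ᵥ ((w • (1 : Matrix (Fin N) (Fin N) ℂ) + (1 - 4 * y * y') • Z + (2 * y') • X)⁻¹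
        * (x • 1 + (2 * y) • Z - X)⁻¹).mulVec b) *
    (1 + a ⬝ᵥ ((x • (1 : Matrix (Fin N) (Fin N) ℂ) + (2 * y) • Z - X)⁻¹
        * (z • 1 - Z)⁻¹).mulVec b)
    = 1 + a ⬝ᵥ ((w • (1 : Matrix (Fin N) (Fin N) ℂ) + (1 - 4 * y * y') • Z + (2 * y') • X)⁻¹
        * ((w + z + 2 * x * y') • (x • (1 : Matrix (Fin N) (Fin N) ℂ) + (2 * y) • Z - X)⁻¹
            - (2 * y') • 1
            - (x • (1 : Matrix (Fin N) (Fin N) ℂ) + (2 * y) • Z - X)⁻¹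
              * (x • 1 + (2 * y) • Z - X)⁻¹)
        * (z • 1 - Z)⁻¹).mulVec b :=
  rank_one_scalar_product_identity_general X Z a b hrank x y y' w z hX hZt hZa
end

section
/- Fix complex numbers y, w, z and suppose Ź = wI + (1+2y)Z − X and Z̃ = zI − Z are invertible, and that xI + 2yZ − X is invertible for every real x. Then ∫_{-∞}^{∞} exp(x(w+z) + y(w²+z²) − x²/2) · (1 + aᵀŹ⁻¹(xI+2yZ−X)⁻¹b) · (1 + aᵀ(xI+2yZ−X)⁻¹Z̃⁻¹b) dx = √(2π) · exp(y(w²+z²) + (w+z)²/2) · (1 + aᵀŹ⁻¹Z̃⁻¹b). That is, the Hermite product of the wave function ψ_𝒳(x,y,z) with its x-adjoint ψ*_𝒳(x,y,−1/2,w) equals √(2π)·e^{y(w²+z²)+(w+z)²/2}·(1 + aᵀŹ⁻¹Z̃⁻¹b). -/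
open Matrix MeasureTheory Complex Filter Topology

namespace CMaux

attribute [local instance] Matrix.linftyOpNormedRing Matrix.linftyOpNormedAlgebra
  Matrix.linftyOpNormedSpace

variable {N : ℕ}

noncomputable abbrev Phi (a b : Fin N → ℂ) : Matrix (Fin N) (Fin N) ℂ →L[ℝ] ℂ :=
  LinearMap.toContinuousLinearMap
  { toFun := fun m => a ⬝ᵥ m.mulVec b
    map_add' := by intros; simp [Matrix.add_mulVec, dotProduct_add]
    map_smul' := by intros; simp [Matrix.smul_mulVec, dotProduct_smul] }

lemma hasDerivAt_inv_path (C : Matrix (Fin N) (Fin N) ℂ) (x₀ : ℝ)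
    (h : ∀ x : ℝ, IsUnit ((x : ℂ) • (1 : Matrix (Fin N) (Fin N) ℂ) + C)) :
    HasDerivAt (fun x : ℝ => ((x : ℂ) • (1 : Matrix (Fin N) (Fin N) ℂ) + C)⁻¹)
      (-((((x₀ : ℂ) • (1 : Matrix (Fin N) (Fin N) ℂ) + C)⁻¹) *
        (((x₀ : ℂ) • (1 : Matrix (Fin N) (Fin N) ℂ) + C)⁻¹))) x₀ := by
  have hA : HasDerivAt (fun x : ℝ => ((x : ℂ) • (1 : Matrix (Fin N) (Fin N) ℂ) + C))
      (1 : Matrix (Fin N) (Fin N) ℂ) x₀ := by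
    exact (((Complex.ofRealCLM.hasDerivAt (x := x₀)).smul_const
      (1 : Matrix (Fin N) (Fin N) ℂ)).add_const C).congr_deriv (by simp)
  have hux : ((h x₀).unit : Matrix (Fin N) (Fin N) ℂ) = (x₀ : ℂ) • 1 + C := (h x₀).unit_spec
  have hinv := (hux ▸ hasFDerivAt_ringInverse (𝕜 := ℝ) (h x₀).unit).comp_hasDerivAt x₀ hA
  have hcoe : (((h x₀).unit⁻¹ : _) : Matrix (Fin N) (Fin N) ℂ)
      = ((x₀ : ℂ) • 1 + C)⁻¹ := by rw [Matrix.coe_units_inv, hux]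
  simp only [Function.comp_def, hcoe, ContinuousLinearMap.neg_apply,
    ContinuousLinearMap.mulLeftRight_apply, mul_one] at hinv
  have heq : (fun x : ℝ => Ring.inverse ((x : ℂ) • (1 : Matrix (Fin N) (Fin N) ℂ) + C))
      = fun x : ℝ => ((x : ℂ) • (1 : Matrix (Fin N) (Fin N) ℂ) + C)⁻¹ := by
    funext x; rw [Matrix.nonsing_inv_eq_ringInverse]
  rwa [heq] at hinv



lemma tendsto_inv_cocompact (C : Matrix (Fin N) (Fin N) ℂ)
    (h : ∀ x : ℝ, IsUnit ((x : ℂ) • (1 : Matrix (Fin N) (Fin N) ℂ) + C)) :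
    Tendsto (fun x : ℝ => ((x : ℂ) • (1 : Matrix (Fin N) (Fin N) ℂ) + C)⁻¹)
      (cocompact ℝ) (𝓝 0) := by
  have hx0 : ∀ᶠ x : ℝ in cocompact ℝ, x ≠ 0 := by
    have : ({(0:ℝ)}ᶜ) ∈ cocompact ℝ :=
      mem_cocompact.mpr ⟨{0}, isCompact_singleton, subset_rfl⟩
    exact this
  -- T x := 1 + x⁻¹ • C
  have hT : Tendsto (fun x : ℝ => (1 : Matrix (Fin N) (Fin N) ℂ) + ((x : ℂ))⁻¹ • C)
      (cocompact ℝ) (𝓝 1) := by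
    have h1 : Tendsto (fun x : ℝ => ((x : ℂ))⁻¹) (cocompact ℝ) (𝓝 0) := by
      have : Tendsto (fun x : ℝ => ‖((x:ℂ))⁻¹‖) (cocompact ℝ) (𝓝 0) := by
        simp only [norm_inv, Complex.norm_real]
        exact Tendsto.comp (tendsto_inv_atTop_zero) tendsto_norm_cocompact_atTop
      exact tendsto_zero_iff_norm_tendsto_zero.mpr this
    have := (h1.smul_const C).const_add (1 : Matrix (Fin N) (Fin N) ℂ)
    simpa using this
  have hTinv : Tendsto (fun x : ℝ => Ring.inverse
      ((1 : Matrix (Fin N) (Fin N) ℂ) + ((x : ℂ))⁻¹ • C)) (cocompact ℝ) (𝓝 1) := by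
    have hc := (NormedRing.inverse_continuousAt (1 : (Matrix (Fin N) (Fin N) ℂ)ˣ))
    have := hc.tendsto.comp hT
    simp only [Units.val_one, Ring.inverse_one] at this
    exact this
  have key : Tendsto (fun x : ℝ => ((x : ℂ))⁻¹ • Ring.inverse
      ((1 : Matrix (Fin N) (Fin N) ℂ) + ((x : ℂ))⁻¹ • C)) (cocompact ℝ) (𝓝 0) := by
    have h1 : Tendsto (fun x : ℝ => ((x : ℂ))⁻¹) (cocompact ℝ) (𝓝 0) := by
      have : Tendsto (fun x : ℝ => ‖((x:ℂ))⁻¹‖) (cocompact ℝ) (𝓝 0) := by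
        simp only [norm_inv, Complex.norm_real]
        exact Tendsto.comp (tendsto_inv_atTop_zero) tendsto_norm_cocompact_atTop
      exact tendsto_zero_iff_norm_tendsto_zero.mpr this
    simpa using h1.smul hTinv
  refine key.congr' ?_
  filter_upwards [hx0] with x hx
  -- show x⁻¹ • Ring.inverse (1 + x⁻¹ • C) = (x • 1 + C)⁻¹
  have hxc : (x : ℂ) ≠ 0 := by exact_mod_cast hx
  have hTu : IsUnit ((1 : Matrix (Fin N) (Fin N) ℂ) + ((x : ℂ))⁻¹ • C) := by
    have : (1 : Matrix (Fin N) (Fin N) ℂ) + ((x : ℂ))⁻¹ • C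
        = ((x:ℂ))⁻¹ • ((x : ℂ) • (1 : Matrix (Fin N) (Fin N) ℂ) + C) := by
      rw [smul_add, smul_smul, inv_mul_cancel₀ hxc, one_smul]
    rw [this, Matrix.isUnit_iff_isUnit_det, Matrix.det_smul]
    exact IsUnit.mul (by exact (isUnit_iff_ne_zero.mpr hxc).inv.pow _)
      ((Matrix.isUnit_iff_isUnit_det _).mp (h x))
  symm
  apply Matrix.inv_eq_left_inv
  have : ((x:ℂ))⁻¹ • Ring.inverse ((1 : Matrix (Fin N) (Fin N) ℂ) + ((x : ℂ))⁻¹ • C)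
      * ((x : ℂ) • 1 + C)
      = Ring.inverse ((1 : Matrix (Fin N) (Fin N) ℂ) + ((x : ℂ))⁻¹ • C)
      * ((1 : Matrix (Fin N) (Fin N) ℂ) + ((x : ℂ))⁻¹ • C) := by
    rw [Matrix.smul_mul, ← mul_smul_comm]
    congr 1
    rw [smul_add, smul_smul, inv_mul_cancel₀ hxc, one_smul]
  rw [this, Ring.inverse_mul_cancel _ hTu]

lemma exists_bound_of_tendsto_cocompact {E : Type*} [NormedAddCommGroup E] {f : ℝ → E}
    (hf : Continuous f) (h : Tendsto f (cocompact ℝ) (𝓝 0)) :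
    ∃ C : ℝ, 0 ≤ C ∧ ∀ x, ‖f x‖ ≤ C := by
  have h1 : f ⁻¹' (Metric.closedBall 0 1) ∈ cocompact ℝ :=
    h (Metric.closedBall_mem_nhds 0 one_pos)
  obtain ⟨t, ht, hts⟩ := mem_cocompact.mp h1
  obtain ⟨C, hC⟩ := ht.exists_bound_of_continuousOn hf.continuousOn
  refine ⟨max C 1, le_max_of_le_right zero_le_one, fun x => ?_⟩
  by_cases hx : x ∈ t
  · exact (hC x hx).trans (le_max_left _ _)
  · have := hts hx
    simp only [Set.mem_preimage, Metric.mem_closedBall, dist_zero_right] at this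
    exact this.trans (le_max_right _ _)



-- dot product through a rank-one middle factor
lemma dot_vecMulVec (a b v : Fin N → ℂ) (U V : Matrix (Fin N) (Fin N) ℂ) :
    a ⬝ᵥ (U * Matrix.vecMulVec b a * V).mulVec v
      = (a ⬝ᵥ U.mulVec b) * (a ⬝ᵥ V.mulVec v) := by
  have h1 : (Matrix.vecMulVec b a).mulVec (V.mulVec v) = (a ⬝ᵥ V.mulVec v) • b := by
    ext i
    simp only [Matrix.mulVec, Matrix.vecMulVec_apply, dotProduct, Pi.smul_apply,
      smul_eq_mul, Finset.mul_sum]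
    simp only [Finset.sum_mul]
    refine Finset.sum_congr rfl fun j _ => Finset.sum_congr rfl fun k _ => by ring
  rw [← Matrix.mulVec_mulVec, ← Matrix.mulVec_mulVec, h1, Matrix.mulVec_smul,
    dotProduct_smul, smul_eq_mul]
  ring

lemma key_algebra (X Z : Matrix (Fin N) (Fin N) ℂ) (a b : Fin N → ℂ)
    (hrank : X * Z - Z * X - 1 = Matrix.vecMulVec b a)
    (y w z x : ℂ)
    (hZa : IsUnit (w • (1 : Matrix (Fin N) (Fin N) ℂ) + (1 + 2 * y) • Z - X))
    (hZt : IsUnit (z • (1 : Matrix (Fin N) (Fin N) ℂ) - Z))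
    (hA : IsUnit (x • (1 : Matrix (Fin N) (Fin N) ℂ) + (2 * y) • Z - X)) :
    a ⬝ᵥ ((w • (1 : Matrix (Fin N) (Fin N) ℂ) + (1 + 2 * y) • Z - X)⁻¹
        * (x • 1 + (2 * y) • Z - X)⁻¹).mulVec b
    + a ⬝ᵥ ((x • (1 : Matrix (Fin N) (Fin N) ℂ) + (2 * y) • Z - X)⁻¹
        * (z • 1 - Z)⁻¹).mulVec b
    + (a ⬝ᵥ ((w • (1 : Matrix (Fin N) (Fin N) ℂ) + (1 + 2 * y) • Z - X)⁻¹
        * (x • 1 + (2 * y) • Z - X)⁻¹).mulVec b)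
      * (a ⬝ᵥ ((x • (1 : Matrix (Fin N) (Fin N) ℂ) + (2 * y) • Z - X)⁻¹
        * (z • 1 - Z)⁻¹).mulVec b)
    + a ⬝ᵥ ((w • (1 : Matrix (Fin N) (Fin N) ℂ) + (1 + 2 * y) • Z - X)⁻¹
        * ((x • (1 : Matrix (Fin N) (Fin N) ℂ) + (2 * y) • Z - X)⁻¹
        * (x • (1 : Matrix (Fin N) (Fin N) ℂ) + (2 * y) • Z - X)⁻¹)
        * (z • 1 - Z)⁻¹).mulVec b
    = a ⬝ᵥ ((w • (1 : Matrix (Fin N) (Fin N) ℂ) + (1 + 2 * y) • Z - X)⁻¹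
        * (z • 1 - Z)⁻¹).mulVec b
    + (w + z - x) * (a ⬝ᵥ ((w • (1 : Matrix (Fin N) (Fin N) ℂ) + (1 + 2 * y) • Z - X)⁻¹
        * ((x • (1 : Matrix (Fin N) (Fin N) ℂ) + (2 * y) • Z - X)⁻¹ * (z • 1 - Z)⁻¹)).mulVec b) := by
  set Zs := w • (1 : Matrix (Fin N) (Fin N) ℂ) + (1 + 2 * y) • Z - X with hZs
  set Zt := z • (1 : Matrix (Fin N) (Fin N) ℂ) - Z with hZtdef
  set A := x • (1 : Matrix (Fin N) (Fin N) ℂ) + (2 * y) • Z - X with hAdef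
  -- cancellation helpers
  have hZs1 : ∀ M : Matrix (Fin N) (Fin N) ℂ, Zs * (Zs⁻¹ * M) = M := fun M => by
    rw [← Matrix.mul_assoc, Matrix.mul_nonsing_inv _ ((Matrix.isUnit_iff_isUnit_det _).mp hZa),
      Matrix.one_mul]
  have hZs2 : ∀ M : Matrix (Fin N) (Fin N) ℂ, Zs⁻¹ * (Zs * M) = M := fun M => by
    rw [← Matrix.mul_assoc, Matrix.nonsing_inv_mul _ ((Matrix.isUnit_iff_isUnit_det _).mp hZa),
      Matrix.one_mul]
  have hZt1 : ∀ M : Matrix (Fin N) (Fin N) ℂ, Zt * (Zt⁻¹ * M) = M := fun M => by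
    rw [← Matrix.mul_assoc, Matrix.mul_nonsing_inv _ ((Matrix.isUnit_iff_isUnit_det _).mp hZt),
      Matrix.one_mul]
  have hZt2 : ∀ M : Matrix (Fin N) (Fin N) ℂ, Zt⁻¹ * (Zt * M) = M := fun M => by
    rw [← Matrix.mul_assoc, Matrix.nonsing_inv_mul _ ((Matrix.isUnit_iff_isUnit_det _).mp hZt),
      Matrix.one_mul]
  have hA1 : ∀ M : Matrix (Fin N) (Fin N) ℂ, A * (A⁻¹ * M) = M := fun M => by
    rw [← Matrix.mul_assoc, Matrix.mul_nonsing_inv _ ((Matrix.isUnit_iff_isUnit_det _).mp hA),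
      Matrix.one_mul]
  have hA2 : ∀ M : Matrix (Fin N) (Fin N) ℂ, A⁻¹ * (A * M) = M := fun M => by
    rw [← Matrix.mul_assoc, Matrix.nonsing_inv_mul _ ((Matrix.isUnit_iff_isUnit_det _).mp hA),
      Matrix.one_mul]
  have hZtZt : Zt * Zt⁻¹ = 1 := Matrix.mul_nonsing_inv _ ((Matrix.isUnit_iff_isUnit_det _).mp hZt)
  have hAA : A * A⁻¹ = 1 := Matrix.mul_nonsing_inv _ ((Matrix.isUnit_iff_isUnit_det _).mp hA)
  -- the middle identity
  have hmid : Zt * A + A * Zs + (X * Z - Z * X - 1) + 1 = (w + z - x) • A + A * A := by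
    rw [hZs, hZtdef, hAdef]
    simp only [add_mul, mul_add, sub_mul, mul_sub, smul_mul_assoc, mul_smul_comm, smul_smul,
      smul_add, smul_sub, Matrix.one_mul, Matrix.mul_one]
    module
  -- the sandwich is linear: apply Zs⁻¹ * A⁻¹ * (·) * A⁻¹ * Zt⁻¹ to hmid
  have hsand : Zs⁻¹ * (A⁻¹ * ((Zt * A + A * Zs + (X * Z - Z * X - 1) + 1) * (A⁻¹ * Zt⁻¹)))
      = Zs⁻¹ * (A⁻¹ * (((w + z - x) • A + A * A) * (A⁻¹ * Zt⁻¹))) := by rw [hmid]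
  -- expand both sides
  rw [hrank] at hsand
  simp only [add_mul, smul_mul_assoc, Matrix.one_mul, mul_add, smul_add, Matrix.mul_smul] at hsand
  -- now simplify cancellations
  simp only [Matrix.mul_assoc, hA1, hA2, hZs2, hZt2, hZtZt, Matrix.mul_one] at hsand
  rw [show Zs⁻¹ * (A⁻¹ * (Matrix.vecMulVec b a * (A⁻¹ * Zt⁻¹)))
      = Zs⁻¹ * A⁻¹ * Matrix.vecMulVec b a * (A⁻¹ * Zt⁻¹) by
    simp only [Matrix.mul_assoc]] at hsand
  have hdot := congrArg (fun M : Matrix (Fin N) (Fin N) ℂ => a ⬝ᵥ M.mulVec b) hsand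
  simp only [Matrix.add_mulVec, dotProduct_add, Matrix.smul_mulVec, dotProduct_smul,
    smul_eq_mul, dot_vecMulVec] at hdot
  simp only [Matrix.mul_assoc]
  linear_combination hdot


end CMaux

attribute [local instance] Matrix.linftyOpNormedRing Matrix.linftyOpNormedAlgebra
  Matrix.linftyOpNormedSpace

set_option maxHeartbeats 1000000 in
/-- The Hermite product of the Calogero–Moser wave function `ψ_𝒳(x,y,z)` with its x-adjoint
`ψ*_𝒳(x,y,−1/2,w)` equals `√(2π)·e^{y(w²+z²)+(w+z)²/2}·(1 + aᵀŹ⁻¹Z̃⁻¹b)`. -/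
theorem hermite_product_wave_xadjoint {N : ℕ} (hN : 0 < N)
    (X Z : Matrix (Fin N) (Fin N) ℂ) (a b : Fin N → ℂ)
    (hrank : X * Z - Z * X - 1 = Matrix.vecMulVec b a)
    (y w z : ℂ)
    (hZa : IsUnit (w • (1 : Matrix (Fin N) (Fin N) ℂ) + (1 + 2 * y) • Z - X))
    (hZt : IsUnit (z • (1 : Matrix (Fin N) (Fin N) ℂ) - Z))
    (hX : ∀ x : ℝ, IsUnit ((x : ℂ) • (1 : Matrix (Fin N) (Fin N) ℂ) + (2 * y) • Z - X)) :
    (∫ x : ℝ,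
      Complex.exp ((x : ℂ) * (w + z) + y * (w ^ 2 + z ^ 2) - (x : ℂ) ^ 2 / 2) *
        (1 + a ⬝ᵥ ((w • (1 : Matrix (Fin N) (Fin N) ℂ) + (1 + 2 * y) • Z - X)⁻¹
            * ((x : ℂ) • 1 + (2 * y) • Z - X)⁻¹).mulVec b) *
        (1 + a ⬝ᵥ (((x : ℂ) • (1 : Matrix (Fin N) (Fin N) ℂ) + (2 * y) • Z - X)⁻¹
            * (z • 1 - Z)⁻¹).mulVec b))
    = (Real.sqrt (2 * Real.pi) : ℂ) * Complex.exp (y * (w ^ 2 + z ^ 2) + (w + z) ^ 2 / 2) *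
        (1 + a ⬝ᵥ ((w • (1 : Matrix (Fin N) (Fin N) ℂ) + (1 + 2 * y) • Z - X)⁻¹
            * (z • 1 - Z)⁻¹).mulVec b) := by
  classical
  set C₀ : Matrix (Fin N) (Fin N) ℂ := (2 * y) • Z - X with hC₀
  have hX' : ∀ x : ℝ, IsUnit ((x : ℂ) • (1 : Matrix (Fin N) (Fin N) ℂ) + C₀) := by
    intro x; rw [hC₀, ← add_sub_assoc]; exact hX x
  set P : Matrix (Fin N) (Fin N) ℂ :=
    (w • (1 : Matrix (Fin N) (Fin N) ℂ) + (1 + 2 * y) • Z - X)⁻¹ with hPdef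
  set R : Matrix (Fin N) (Fin N) ℂ := (z • (1 : Matrix (Fin N) (Fin N) ℂ) - Z)⁻¹ with hRdef
  set Qf : ℝ → Matrix (Fin N) (Fin N) ℂ :=
    fun x => ((x : ℂ) • (1 : Matrix (Fin N) (Fin N) ℂ) + C₀)⁻¹ with hQfdef
  have hQeq : ∀ x : ℝ,
      ((x : ℂ) • (1 : Matrix (Fin N) (Fin N) ℂ) + (2 * y) • Z - X)⁻¹ = Qf x := by
    intro x; rw [hQfdef, hC₀]; simp only [← add_sub_assoc]
  set u : ℂ := w + z with hu
  set d0 : ℂ := y * (w ^ 2 + z ^ 2) with hd0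
  set E : ℝ → ℂ := fun x => Complex.exp ((-(1/2) : ℂ) * (x:ℂ) ^ 2 + u * (x:ℂ) + d0) with hEdef
  set p : ℝ → ℂ := fun x => a ⬝ᵥ (P * Qf x).mulVec b with hpdef
  set q : ℝ → ℂ := fun x => a ⬝ᵥ (Qf x * R).mulVec b with hqdef
  set S : ℝ → ℂ := fun x => a ⬝ᵥ (P * (Qf x * R)).mulVec b with hSdef
  set T : ℝ → ℂ := fun x => a ⬝ᵥ (P * (Qf x * (Qf x * R))).mulVec b with hTdef
  set c : ℂ := a ⬝ᵥ (P * R).mulVec b with hcdef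
  set DF : ℝ → ℂ := fun x => E x * (1 + p x) * (1 + q x) - E x * (1 + c) with hDFdef
  set F : ℝ → ℂ := fun x => E x * S x with hFdef
  -- Phi agrees with the dot-product expressions
  have hPhi : ∀ M : Matrix (Fin N) (Fin N) ℂ, CMaux.Phi a b M = a ⬝ᵥ M.mulVec b := fun _ => rfl
  -- the key algebraic identity
  have halg : ∀ x : ℝ, p x + q x + p x * q x + T x = c + (u - x) * S x := by
    intro x
    have h := CMaux.key_algebra X Z a b hrank y w z (x : ℂ) hZa hZt (hX x)
    rw [hQeq x] at h
    simp only [Matrix.mul_assoc] at h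
    simpa [hpdef, hqdef, hSdef, hTdef, hcdef, hu] using h
  -- derivative of Qf
  have hQd : ∀ x₀ : ℝ, HasDerivAt Qf (-(Qf x₀ * Qf x₀)) x₀ := fun x₀ =>
    CMaux.hasDerivAt_inv_path C₀ x₀ hX'
  have hQcont : Continuous Qf := by
    rw [continuous_iff_continuousAt]; exact fun x => (hQd x).continuousAt
  -- derivative of S
  have hSd : ∀ x₀ : ℝ, HasDerivAt S (-(T x₀)) x₀ := by
    intro x₀
    have hg : HasDerivAt (fun x => P * (Qf x * R)) (P * (-(Qf x₀ * Qf x₀) * R)) x₀ :=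
      ((hQd x₀).mul_const R).const_mul P
    have := (CMaux.Phi a b).hasFDerivAt.comp_hasDerivAt x₀ hg
    simp only [Function.comp_def, hPhi] at this
    have h2 : a ⬝ᵥ (P * (-(Qf x₀ * Qf x₀) * R)).mulVec b = -(T x₀) := by
      simp only [hTdef, Matrix.neg_mul, Matrix.mul_neg, Matrix.mul_assoc, Matrix.neg_mulVec,
        dotProduct_neg]
    exact this.congr_deriv h2
  -- derivative of E
  have hEd : ∀ x₀ : ℝ, HasDerivAt E ((u - x₀) * E x₀) x₀ := by
    intro x₀
    have hx : HasDerivAt (fun x : ℝ => (x : ℂ)) 1 x₀ := by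
      exact Complex.ofRealCLM.hasDerivAt (x := x₀)
    have hf : HasDerivAt (fun x : ℝ => (-(1/2) : ℂ) * (x:ℂ) ^ 2 + u * (x:ℂ) + d0)
        (u - x₀) x₀ := by
      have h2 : HasDerivAt (fun x : ℝ => ((x:ℂ)) ^ 2) (2 * (x₀:ℂ)) x₀ := by
        have := hx.mul hx
        simp only [pow_two]
        exact this.congr_deriv (by ring)
      have := ((h2.const_mul (-(1/2) : ℂ)).add (hx.const_mul u)).add_const d0
      exact this.congr_deriv (by ring)
    have := hf.cexp
    rw [hEdef]
    exact this.congr_deriv (mul_comm _ _)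
  -- derivative of F equals DF
  have hFd : ∀ x₀ : ℝ, HasDerivAt F (DF x₀) x₀ := by
    intro x₀
    have := (hEd x₀).mul (hSd x₀)
    rw [hFdef]
    refine this.congr_deriv (Eq.symm ?_)
    have h := halg x₀
    rw [hDFdef]
    have : p x₀ + q x₀ + p x₀ * q x₀ - c = (u - x₀) * S x₀ - T x₀ := by
      linear_combination h
    calc E x₀ * (1 + p x₀) * (1 + q x₀) - E x₀ * (1 + c)
        = E x₀ * (p x₀ + q x₀ + p x₀ * q x₀ - c) := by ring
      _ = E x₀ * ((u - x₀) * S x₀ - T x₀) := by rw [this]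
      _ = (u - ↑x₀) * E x₀ * S x₀ + E x₀ * -T x₀ := by ring
  -- tendsto facts
  have hQ0 : Tendsto Qf (cocompact ℝ) (𝓝 0) := CMaux.tendsto_inv_cocompact C₀ hX'
  have hmul0 : Tendsto (fun x => P * (Qf x * R)) (cocompact ℝ) (𝓝 0) := by
    have := (tendsto_const_nhds (x := P)).mul (hQ0.mul (tendsto_const_nhds (x := R)))
    simpa using this
  have hS0 : Tendsto S (cocompact ℝ) (𝓝 0) := by
    have := ((CMaux.Phi a b).continuous.tendsto 0).comp hmul0
    simpa [Function.comp_def, hPhi, hSdef] using this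
  have hp0 : Tendsto p (cocompact ℝ) (𝓝 0) := by
    have h0 : Tendsto (fun x => P * Qf x) (cocompact ℝ) (𝓝 0) := by
      have := (tendsto_const_nhds (x := P)).mul hQ0
      simpa using this
    have := ((CMaux.Phi a b).continuous.tendsto 0).comp h0
    simpa [Function.comp_def, hPhi, hpdef] using this
  have hq0 : Tendsto q (cocompact ℝ) (𝓝 0) := by
    have h0 : Tendsto (fun x => Qf x * R) (cocompact ℝ) (𝓝 0) := by
      have := hQ0.mul (tendsto_const_nhds (x := R))
      simpa using this
    have := ((CMaux.Phi a b).continuous.tendsto 0).comp h0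
    simpa [Function.comp_def, hPhi, hqdef] using this
  -- continuity
  have hpc : Continuous p := by
    rw [hpdef]
    exact (CMaux.Phi a b).continuous.comp (continuous_const.mul hQcont)
  have hqc : Continuous q := by
    rw [hqdef]
    exact (CMaux.Phi a b).continuous.comp (hQcont.mul continuous_const)
  have hSc : Continuous S := by
    rw [hSdef]
    exact (CMaux.Phi a b).continuous.comp (continuous_const.mul (hQcont.mul continuous_const))
  have hEc : Continuous E := by
    rw [hEdef]
    fun_prop
  -- bounds
  obtain ⟨Cp, hCp0, hCp⟩ := CMaux.exists_bound_of_tendsto_cocompact hpc hp0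
  obtain ⟨Cq, hCq0, hCq⟩ := CMaux.exists_bound_of_tendsto_cocompact hqc hq0
  obtain ⟨Cs, hCs0, hCs⟩ := CMaux.exists_bound_of_tendsto_cocompact hSc hS0
  -- norm of E
  have hEnorm : ∀ x : ℝ, ‖E x‖ = Real.exp (-(x - u.re)^2/2 + (u.re^2/2 + d0.re)) := by
    intro x
    rw [hEdef]
    simp only [Complex.norm_exp]
    congr 1
    simp [Complex.add_re, Complex.mul_re, Complex.ofReal_re, Complex.ofReal_im,
      Complex.neg_re, Complex.neg_im, Complex.div_re, Complex.div_im, pow_two]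
    ring
  -- tendsto of ‖E‖ to zero
  have hEnorm0 : Tendsto (fun x : ℝ => ‖E x‖) (cocompact ℝ) (𝓝 0) := by
    have h3 : Tendsto (fun x : ℝ => |x - u.re|) (cocompact ℝ) atTop := by
      refine tendsto_atTop_mono (fun x => ?_)
        (tendsto_atTop_add_const_right _ (-|u.re|) tendsto_norm_cocompact_atTop)
      have := abs_sub_abs_le_abs_sub x u.re
      rw [Real.norm_eq_abs]; linarith
    have h4 : Tendsto (fun x : ℝ => (x - u.re)^2) (cocompact ℝ) atTop := by
      have := (tendsto_pow_atTop (n := 2) (by norm_num)).comp h3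
      simpa [Function.comp_def, _root_.sq_abs] using this
    have h5 : Tendsto (fun x : ℝ => -(x - u.re)^2/2 + (u.re^2/2 + d0.re)) (cocompact ℝ) atBot := by
      refine tendsto_atBot_add_const_right _ _ ?_
      have := h4.atTop_mul_const_of_neg (r := -(1/2 : ℝ)) (by norm_num)
      convert this using 2 with x
      ring
    have := Real.tendsto_exp_atBot.comp h5
    simp only [Function.comp_def] at this
    convert this using 2 with x
    rw [hEnorm x]
  -- F tends to zero at both ends
  have hle_top : (atTop : Filter ℝ) ≤ cocompact ℝ := by
    rw [cocompact_eq_atBot_atTop]; exact le_sup_right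
  have hle_bot : (atBot : Filter ℝ) ≤ cocompact ℝ := by
    rw [cocompact_eq_atBot_atTop]; exact le_sup_left
  have hFnorm : ∀ x : ℝ, ‖F x‖ ≤ Cs * ‖E x‖ := by
    intro x
    rw [hFdef]
    calc ‖E x * S x‖ = ‖E x‖ * ‖S x‖ := norm_mul _ _
      _ ≤ ‖E x‖ * Cs := by
          exact mul_le_mul_of_nonneg_left (hCs x) (norm_nonneg _)
      _ = Cs * ‖E x‖ := by ring
  have hF0 : Tendsto F (cocompact ℝ) (𝓝 0) := by
    apply squeeze_zero_norm hFnorm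
    have := hEnorm0.const_mul Cs
    simpa using this
  -- integrability
  have hEint : Integrable E := by
    rw [hEdef]
    exact integrable_cexp_quadratic' (by norm_num : (-(1/2) : ℂ).re < 0) u d0
  have hIint : Integrable (fun x : ℝ => E x * (1 + p x) * (1 + q x)) := by
    apply Integrable.mono' ((hEint.norm.const_mul ((1+Cp)*(1+Cq))))
    · exact ((hEc.mul ((continuous_const.add hpc))).mul
        ((continuous_const.add hqc))).aestronglyMeasurable
    · refine ae_of_all _ fun x => ?_
      calc ‖E x * (1 + p x) * (1 + q x)‖ = ‖E x‖ * ‖1 + p x‖ * ‖1 + q x‖ := by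
            rw [norm_mul, norm_mul]
        _ ≤ ‖E x‖ * (1 + Cp) * (1 + Cq) := by
            apply mul_le_mul
            · apply mul_le_mul_of_nonneg_left _ (norm_nonneg _)
              exact (norm_add_le _ _).trans (by simpa using hCp x)
            · exact (norm_add_le _ _).trans (by simpa using hCq x)
            · exact norm_nonneg _
            · positivity
        _ = (1 + Cp) * (1 + Cq) * ‖E x‖ := by ring
  have hGint : Integrable (fun x : ℝ => E x * (1 + c)) := hEint.mul_const _
  have hDFint : Integrable DF := by
    rw [hDFdef]
    exact hIint.sub hGint
  -- integral of DF is zero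
  have hDF0 : ∫ x : ℝ, DF x = 0 := by
    rw [integral_of_hasDerivAt_of_tendsto hFd hDFint (hF0.mono_left hle_bot)
      (hF0.mono_left hle_top)]
    simp
  -- rewrite the integrand
  have key : ∀ x : ℝ,
      Complex.exp ((x : ℂ) * (w + z) + y * (w ^ 2 + z ^ 2) - (x : ℂ) ^ 2 / 2) *
        (1 + a ⬝ᵥ (P * ((x : ℂ) • 1 + (2 * y) • Z - X)⁻¹).mulVec b) *
        (1 + a ⬝ᵥ (((x : ℂ) • (1 : Matrix (Fin N) (Fin N) ℂ) + (2 * y) • Z - X)⁻¹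
            * R).mulVec b)
      = DF x + E x * (1 + c) := by
    intro x
    rw [hQeq x]
    have hexp : (x : ℂ) * (w + z) + y * (w ^ 2 + z ^ 2) - (x : ℂ) ^ 2 / 2
        = (-(1/2) : ℂ) * (x:ℂ) ^ 2 + u * (x:ℂ) + d0 := by rw [hu, hd0]; ring
    rw [hexp]
    rw [hDFdef, hEdef, hpdef, hqdef]
    ring
  refine (integral_congr_ae (ae_of_all _ key)).trans ?_
  rw [integral_add hDFint hGint, hDF0, zero_add, integral_mul_const]
  -- evaluate the Gaussian integral
  have hgauss : ∫ x : ℝ, E x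
      = (Real.sqrt (2 * Real.pi) : ℂ) * Complex.exp (d0 + u ^ 2 / 2) := by
    rw [hEdef]
    rw [integral_cexp_quadratic (by norm_num : (-(1/2) : ℂ).re < 0) u d0]
    have h1 : ((Real.pi : ℂ) / -(-(1/2))) = ((2 * Real.pi : ℝ) : ℂ) := by
      push_cast; ring
    rw [h1]
    have h2 : ((2 * Real.pi : ℝ) : ℂ) ^ (1/2 : ℂ) = (Real.sqrt (2 * Real.pi) : ℂ) := by
      rw [show (1/2 : ℂ) = ((1/2 : ℝ) : ℂ) by norm_num,
        ← Complex.ofReal_cpow (by positivity), Real.sqrt_eq_rpow]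
    rw [h2]
    congr 1
    ring
  rw [hgauss]
end

section
/- Suppose there exist complex numbers c_0, …, c_N such that det(wI−X)·det(zI−Z) + aᵀ·adj(wI−X)·adj(zI−Z)·b = Σ_{k=0}^{N} c_k·(wz)^k for all complex w, z (i.e., the doubly-normalized wave function at second time 0 depends only on the product wz). Then det(wI−X) = w^N for all complex w and det(zI−Z) = z^N for all complex z; in particular both X and Z are nilpotent. -/
open Matrix

section Helpers

open Polynomial

variable {N : ℕ}

private lemma charmatrix_map_eval' (M : Matrix (Fin N) (Fin N) ℂ) (w : ℂ) :
    (charmatrix M).map (Polynomial.eval w) = w • (1 : Matrix (Fin N) (Fin N) ℂ) - M := by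
  ext i j
  by_cases h : i = j <;>
    simp [h, Matrix.sub_apply, Matrix.smul_apply, Matrix.one_apply]

private lemma eval_charpoly' (M : Matrix (Fin N) (Fin N) ℂ) (w : ℂ) :
    Polynomial.eval w M.charpoly = (w • (1 : Matrix (Fin N) (Fin N) ℂ) - M).det := by
  rw [Matrix.charpoly, ← charmatrix_map_eval' M w]
  exact RingHom.map_det (Polynomial.evalRingHom w) (charmatrix M)

private lemma eval_adjugate_charmatrix' (M : Matrix (Fin N) (Fin N) ℂ) (w : ℂ) (i j : Fin N) :
    Polynomial.eval w ((charmatrix M).adjugate i j)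
      = (w • (1 : Matrix (Fin N) (Fin N) ℂ) - M).adjugate i j := by
  have h := RingHom.map_adjugate (Polynomial.evalRingHom w) (charmatrix M)
  have h2 : (Polynomial.evalRingHom w).mapMatrix (charmatrix M)
      = w • (1 : Matrix (Fin N) (Fin N) ℂ) - M := charmatrix_map_eval' M w
  rw [h2] at h
  calc Polynomial.eval w ((charmatrix M).adjugate i j)
      = ((Polynomial.evalRingHom w).mapMatrix ((charmatrix M).adjugate)) i j := rfl
    _ = _ := by rw [h]

private lemma adjugate_charmatrix_natDegree_le' (M : Matrix (Fin N) (Fin N) ℂ)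
    (i j : Fin N) : ((charmatrix M).adjugate i j).natDegree ≤ N - 1 := by
  rw [adjugate_apply, det_apply']
  apply Polynomial.natDegree_sum_le_of_forall_le
  intro σ _
  refine le_trans (natDegree_mul_le) ?_
  rw [Polynomial.natDegree_intCast, zero_add]
  refine le_trans (Polynomial.natDegree_prod_le _ _) ?_
  calc ∑ k : Fin N, (((charmatrix M).updateRow j (Pi.single i 1)) (σ k) k).natDegree
      ≤ ∑ k : Fin N, (if σ k = j then 0 else 1) := by
        apply Finset.sum_le_sum
        intro k _
        rw [Matrix.updateRow_apply]
        split_ifs with h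
        · simp [Pi.single_apply]
          split_ifs <;> simp
        · exact le_trans (charmatrix_apply_natDegree_le _ _) (by split_ifs <;> simp)
    _ ≤ N - 1 := by
        rw [← Finset.sum_erase_add _ _ (Finset.mem_univ (σ⁻¹ j))]
        have : σ (σ⁻¹ j) = j := Equiv.apply_symm_apply σ j
        rw [if_pos this, add_zero]
        refine le_trans (Finset.sum_le_sum (g := fun _ => 1) fun k _ => by split_ifs <;> simp) ?_
        rw [Finset.sum_const, smul_eq_mul, mul_one, Finset.card_erase_of_mem (Finset.mem_univ _),
          Finset.card_univ, Fintype.card_fin]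

private lemma adjugate_charmatrix_coeff_card' (hN : 0 < N) (M : Matrix (Fin N) (Fin N) ℂ)
    (i j : Fin N) : ((charmatrix M).adjugate i j).coeff N = 0 := by
  apply Polynomial.coeff_eq_zero_of_natDegree_lt
  exact lt_of_le_of_lt (adjugate_charmatrix_natDegree_le' M i j) (Nat.pred_lt hN.ne')

private lemma charpoly_coeff_card' [NeZero N] (M : Matrix (Fin N) (Fin N) ℂ) :
    M.charpoly.coeff N = 1 := by
  have h := M.charpoly_monic
  have hd : M.charpoly.natDegree = N := by
    rw [Matrix.charpoly_natDegree_eq_dim, Fintype.card_fin]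
  have := h.coeff_natDegree
  rwa [hd] at this

private lemma dot_expand_left (A B : Matrix (Fin N) (Fin N) ℂ) (a b : Fin N → ℂ) :
    a ⬝ᵥ (A * B).mulVec b = ∑ i, ∑ k, a i * (A i k * (B.mulVec b) k) := by
  rw [← Matrix.mulVec_mulVec]
  simp [dotProduct, Matrix.mulVec, Finset.mul_sum]

private lemma dot_expand_right (A B : Matrix (Fin N) (Fin N) ℂ) (a b : Fin N → ℂ) :
    a ⬝ᵥ (A * B).mulVec b = ∑ k, ∑ j, (Matrix.vecMul a A) k * (B k j * b j) := by
  rw [← Matrix.mulVec_mulVec, Matrix.dotProduct_mulVec]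
  simp [dotProduct, Matrix.mulVec, Finset.mul_sum]

end Helpers

/-- If the doubly-normalized wave function at second time `0` depends on `w` and `z` only
through the product `wz`, then `det(wI−X) = w^N`, `det(zI−Z) = z^N`, and in particular both
`X` and `Z` are nilpotent. -/
theorem nilpotent_of_product_dependence {N : ℕ} (hN : 0 < N)
    (X Z : Matrix (Fin N) (Fin N) ℂ) (a b : Fin N → ℂ)
    (hrank : X * Z - Z * X - 1 = Matrix.vecMulVec b a)
    (c : ℕ → ℂ)
    (hc : ∀ w z : ℂ,
      (w • (1 : Matrix (Fin N) (Fin N) ℂ) - X).det * (z • (1 : Matrix (Fin N) (Fin N) ℂ) - Z).det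
        + a ⬝ᵥ ((w • (1 : Matrix (Fin N) (Fin N) ℂ) - X).adjugate
            * (z • (1 : Matrix (Fin N) (Fin N) ℂ) - Z).adjugate).mulVec b
      = ∑ k ∈ Finset.range (N + 1), c k * (w * z) ^ k) :
    (∀ w : ℂ, (w • (1 : Matrix (Fin N) (Fin N) ℂ) - X).det = w ^ N)
    ∧ (∀ z : ℂ, (z • (1 : Matrix (Fin N) (Fin N) ℂ) - Z).det = z ^ N)
    ∧ IsNilpotent X ∧ IsNilpotent Z := by
  have : NeZero N := ⟨hN.ne'⟩
  -- Step 1 : det (z•1 - Z) = c N * z^N for all z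
  have hq : ∀ z : ℂ, (z • (1 : Matrix (Fin N) (Fin N) ℂ) - Z).det = c N * z ^ N := by
    intro z
    set B := (z • (1 : Matrix (Fin N) (Fin N) ℂ) - Z).adjugate with hB
    set u : Fin N → ℂ := B.mulVec b with hu
    set P : Polynomial ℂ :=
      X.charpoly * Polynomial.C ((z • (1 : Matrix (Fin N) (Fin N) ℂ) - Z).det)
        + ∑ i : Fin N, ∑ k : Fin N,
            Polynomial.C (a i) * (charmatrix X).adjugate i k * Polynomial.C (u k) with hP
    set Q : Polynomial ℂ :=
      ∑ k ∈ Finset.range (N + 1), Polynomial.C (c k * z ^ k) * Polynomial.X ^ k with hQ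
    have hPQ : P = Q := by
      apply Polynomial.funext
      intro w
      have h1 : Polynomial.eval w P
          = (w • (1 : Matrix (Fin N) (Fin N) ℂ) - X).det
              * (z • (1 : Matrix (Fin N) (Fin N) ℂ) - Z).det
            + ∑ i : Fin N, ∑ k : Fin N,
                a i * ((w • (1 : Matrix (Fin N) (Fin N) ℂ) - X).adjugate i k * u k) := by
        simp [hP, Polynomial.eval_finset_sum, eval_charpoly', eval_adjugate_charmatrix',
          mul_assoc]
      have h2 : Polynomial.eval w Q = ∑ k ∈ Finset.range (N + 1), c k * (w * z) ^ k := by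
        simp [hQ, Polynomial.eval_finset_sum, mul_pow]
        ring_nf
        apply Finset.sum_congr rfl
        intros; ring
      rw [h1, h2, ← dot_expand_left, hc w z]
    have hcoeff := congrArg (fun p => Polynomial.coeff p N) hPQ
    simp only [hP, hQ, Polynomial.coeff_add, Polynomial.coeff_mul_C,
      Polynomial.finset_sum_coeff, Polynomial.coeff_C_mul, Polynomial.coeff_X_pow,
      charpoly_coeff_card', adjugate_charmatrix_coeff_card' hN, one_mul,
      mul_zero, zero_mul, Finset.sum_const_zero, add_zero] at hcoeff
    rw [Finset.sum_eq_single N (fun k _ hk => by simp [Ne.symm hk])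
      (fun h => absurd (Finset.self_mem_range_succ N) h)] at hcoeff
    simpa using hcoeff
  -- Step 2 : c N = 1
  have hcN : c N = 1 := by
    have hZch : Z.charpoly = Polynomial.C (c N) * Polynomial.X ^ N := by
      apply Polynomial.funext
      intro z
      simp [eval_charpoly', hq z]
    have := congrArg (fun p => Polynomial.coeff p N) hZch
    simpa [charpoly_coeff_card', Polynomial.coeff_C_mul, Polynomial.coeff_X_pow] using this.symm
  have hq' : ∀ z : ℂ, (z • (1 : Matrix (Fin N) (Fin N) ℂ) - Z).det = z ^ N := by
    intro z; rw [hq z, hcN, one_mul]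
  have hZcoeff : Z.charpoly.coeff N = 1 := charpoly_coeff_card' Z
  -- Step 3 : det (w•1 - X) = w^N for all w
  have hp : ∀ w : ℂ, (w • (1 : Matrix (Fin N) (Fin N) ℂ) - X).det = w ^ N := by
    intro w
    set A := (w • (1 : Matrix (Fin N) (Fin N) ℂ) - X).adjugate with hA
    set v : Fin N → ℂ := Matrix.vecMul a A with hv
    set P : Polynomial ℂ :=
      Polynomial.C ((w • (1 : Matrix (Fin N) (Fin N) ℂ) - X).det) * Z.charpoly
        + ∑ k : Fin N, ∑ j : Fin N,
            Polynomial.C (v k) * (charmatrix Z).adjugate k j * Polynomial.C (b j) with hP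
    set Q : Polynomial ℂ :=
      ∑ k ∈ Finset.range (N + 1), Polynomial.C (c k * w ^ k) * Polynomial.X ^ k with hQ
    have hPQ : P = Q := by
      apply Polynomial.funext
      intro z
      have h1 : Polynomial.eval z P
          = (w • (1 : Matrix (Fin N) (Fin N) ℂ) - X).det
              * (z • (1 : Matrix (Fin N) (Fin N) ℂ) - Z).det
            + ∑ k : Fin N, ∑ j : Fin N,
                v k * ((z • (1 : Matrix (Fin N) (Fin N) ℂ) - Z).adjugate k j * b j) := by
        simp [hP, Polynomial.eval_finset_sum, eval_charpoly', eval_adjugate_charmatrix',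
          mul_assoc]
      have h2 : Polynomial.eval z Q = ∑ k ∈ Finset.range (N + 1), c k * (w * z) ^ k := by
        simp [hQ, Polynomial.eval_finset_sum, mul_pow]
        ring_nf
        apply Finset.sum_congr rfl
        intros; ring
      rw [h1, h2, ← dot_expand_right, hc w z]
    have hcoeff := congrArg (fun p => Polynomial.coeff p N) hPQ
    simp only [hP, hQ, Polynomial.coeff_add, Polynomial.coeff_C_mul,
      Polynomial.finset_sum_coeff, Polynomial.coeff_mul_C, Polynomial.coeff_X_pow,
      hZcoeff, adjugate_charmatrix_coeff_card' hN, mul_one,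
      mul_zero, zero_mul, Finset.sum_const_zero, add_zero] at hcoeff
    rw [Finset.sum_eq_single N (fun k _ hk => by simp [Ne.symm hk])
      (fun h => absurd (Finset.self_mem_range_succ N) h)] at hcoeff
    rw [hcoeff]
    simp [hcN]
  -- Step 4 : nilpotency
  have hnil : ∀ (M : Matrix (Fin N) (Fin N) ℂ),
      (∀ w : ℂ, (w • (1 : Matrix (Fin N) (Fin N) ℂ) - M).det = w ^ N) → IsNilpotent M := by
    intro M hM
    have hch : M.charpoly = Polynomial.X ^ N := by
      apply Polynomial.funext
      intro w
      simp [eval_charpoly', hM w]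
    refine ⟨N, ?_⟩
    have := M.aeval_self_charpoly
    rwa [hch, map_pow, Polynomial.aeval_X] at this
  exact ⟨hp, hq', hnil X hp, hnil Z hq'⟩
end

section
/- Let r be a positive integer, and let A and B be N×r complex matrices satisfying the rank-r condition X·Z − Z·X − I_N = B·Aᵀ. Fix complex numbers x, y, y', w, z and suppose the N×N matrices X̃ = xI + 2yZ − X, Z̃ = zI − Z, and Ź = wI + (1−4yy')Z + 2y'X are all invertible. Then the r×r matrices satisfy (I_r + AᵀŹ⁻¹X̃⁻¹B)·(I_r + AᵀX̃⁻¹Z̃⁻¹B) = I_r + AᵀŹ⁻¹·((w+z+2xy')·X̃⁻¹ − 2y'·I_N − X̃⁻²)·Z̃⁻¹B. -/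
/-!
Write `M = X̃`, `T = Z̃`, `S = Ź`. Multiplying out, the product equals
`1 + Aᵀ (S⁻¹M⁻¹ + M⁻¹T⁻¹ + S⁻¹M⁻¹ B Aᵀ M⁻¹T⁻¹) B = 1 + Aᵀ S⁻¹ M⁻¹ (T M + M S + B Aᵀ) M⁻¹ T⁻¹ B`.
The rank condition replaces `B Aᵀ` by `XZ - ZX - 1`, after which `T M + M S + B Aᵀ` is the
polynomial `(w + z + 2xy') M - 2y' M² - 1` in `M` alone, which `M⁻¹ (·) M⁻¹` sends to
`(w + z + 2xy') M⁻¹ - 2y' - M⁻²`.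
-/

open Matrix

theorem Matrix.one_add_mul_mul_one_add_mul_mul {m n α : Type*} [Fintype m] [Fintype n]
    [DecidableEq m] [Semiring α] (U : Matrix m n α) (V : Matrix n m α) (P Q : Matrix n n α) :
    (1 + U * P * V) * (1 + U * Q * V) = 1 + U * (P + Q + P * (V * U) * Q) * V := by
  simp only [Matrix.mul_add, Matrix.add_mul, Matrix.mul_one, Matrix.one_mul, Matrix.mul_assoc]
  abel

/- With `M = x + 2yZ - X` one has `Ź = (w + 2xy') + Z - 2y'M`, so the left side is
`(w + z + 2xy')M - 2y'M² + (MZ - ZM) + (XZ - ZX) - 1`, and `MZ - ZM = -(XZ - ZX)`. -/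
theorem calogeroMoser_quadratic_relation {R A : Type*} [CommRing R] [Ring A] [Algebra R A]
    (X Z : A) (x y y' w z : R) :
    (z • 1 - Z) * (x • 1 + (2 * y) • Z - X) + (x • 1 + (2 * y) • Z - X)
        * (w • 1 + (1 - 4 * y * y') • Z + (2 * y') • X) + (X * Z - Z * X - 1)
      = (w + z + 2 * x * y') • (x • 1 + (2 * y) • Z - X)
        - (2 * y') • ((x • 1 + (2 * y) • Z - X) * (x • 1 + (2 * y) • Z - X)) - 1 := by
  simp only [smul_smul, mul_add, add_mul, sub_mul, mul_sub, smul_mul_assoc, mul_smul_comm,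
    smul_add, smul_sub, mul_one, one_mul]
  module

section Inverse

variable {n α : Type*} [Fintype n] [DecidableEq n] [CommRing α]

theorem Matrix.inv_mul_add_inv_mul_eq {M T S : Matrix n n α} (hM : IsUnit M.det)
    (hT : IsUnit T.det) (hS : IsUnit S.det) (C : Matrix n n α) :
    S⁻¹ * M⁻¹ + M⁻¹ * T⁻¹ + S⁻¹ * M⁻¹ * C * (M⁻¹ * T⁻¹)
      = S⁻¹ * (M⁻¹ * (T * M + M * S + C) * M⁻¹) * T⁻¹ := by
  simp only [Matrix.mul_add, Matrix.add_mul, Matrix.mul_assoc, nonsing_inv_mul_cancel_left _ _ hM,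
    nonsing_inv_mul_cancel_left _ _ hS, mul_nonsing_inv _ hT, mul_nonsing_inv _ hM, Matrix.mul_one]

theorem Matrix.inv_mul_quadratic_mul_inv {M : Matrix n n α} (hM : IsUnit M.det) (a b : α) :
    M⁻¹ * (a • M - b • (M * M) - 1) * M⁻¹ = a • M⁻¹ - b • 1 - M⁻¹ * M⁻¹ := by
  simp only [Matrix.mul_sub, Matrix.sub_mul, Matrix.mul_smul, Matrix.smul_mul, Matrix.mul_one,
    nonsing_inv_mul _ hM, mul_nonsing_inv _ hM, Matrix.one_mul, nonsing_inv_mul_cancel_left _ _ hM]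

end Inverse

theorem spin_rank_r_product_identity_general {N r : ℕ}
    (X Z : Matrix (Fin N) (Fin N) ℂ) (A B : Matrix (Fin N) (Fin r) ℂ)
    (hrank : X * Z - Z * X - 1 = B * Aᵀ)
    (x y y' w z : ℂ)
    (hX : IsUnit (x • (1 : Matrix (Fin N) (Fin N) ℂ) + (2 * y) • Z - X))
    (hZt : IsUnit (z • (1 : Matrix (Fin N) (Fin N) ℂ) - Z))
    (hZa : IsUnit (w • (1 : Matrix (Fin N) (Fin N) ℂ) + (1 - 4 * y * y') • Z + (2 * y') • X)) :
    ((1 : Matrix (Fin r) (Fin r) ℂ)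
        + Aᵀ * (w • (1 : Matrix (Fin N) (Fin N) ℂ) + (1 - 4 * y * y') • Z + (2 * y') • X)⁻¹
            * (x • (1 : Matrix (Fin N) (Fin N) ℂ) + (2 * y) • Z - X)⁻¹ * B) *
    ((1 : Matrix (Fin r) (Fin r) ℂ)
        + Aᵀ * (x • (1 : Matrix (Fin N) (Fin N) ℂ) + (2 * y) • Z - X)⁻¹
            * (z • (1 : Matrix (Fin N) (Fin N) ℂ) - Z)⁻¹ * B)
    = (1 : Matrix (Fin r) (Fin r) ℂ)
        + Aᵀ * (w • (1 : Matrix (Fin N) (Fin N) ℂ) + (1 - 4 * y * y') • Z + (2 * y') • X)⁻¹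
            * ((w + z + 2 * x * y') • (x • (1 : Matrix (Fin N) (Fin N) ℂ) + (2 * y) • Z - X)⁻¹
                - (2 * y') • (1 : Matrix (Fin N) (Fin N) ℂ)
                - (x • (1 : Matrix (Fin N) (Fin N) ℂ) + (2 * y) • Z - X)⁻¹
                  * (x • (1 : Matrix (Fin N) (Fin N) ℂ) + (2 * y) • Z - X)⁻¹)
            * (z • (1 : Matrix (Fin N) (Fin N) ℂ) - Z)⁻¹ * B := by
  set M := x • (1 : Matrix (Fin N) (Fin N) ℂ) + (2 * y) • Z - X
  set T := z • (1 : Matrix (Fin N) (Fin N) ℂ) - Z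
  set S := w • (1 : Matrix (Fin N) (Fin N) ℂ) + (1 - 4 * y * y') • Z + (2 * y') • X
  rw [isUnit_iff_isUnit_det] at hX hZt hZa
  calc _ = 1 + Aᵀ * (S⁻¹ * M⁻¹ + M⁻¹ * T⁻¹ + S⁻¹ * M⁻¹ * (B * Aᵀ) * (M⁻¹ * T⁻¹)) * B := by
        simpa only [Matrix.mul_assoc] using
          Matrix.one_add_mul_mul_one_add_mul_mul Aᵀ B (S⁻¹ * M⁻¹) (M⁻¹ * T⁻¹)
    _ = 1 + Aᵀ * (S⁻¹ * (M⁻¹ * (T * M + M * S + (X * Z - Z * X - 1)) * M⁻¹) * T⁻¹) * B := by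
        rw [hrank, Matrix.inv_mul_add_inv_mul_eq hX hZt hZa]
    _ = _ := by
        rw [calogeroMoser_quadratic_relation, Matrix.inv_mul_quadratic_mul_inv hX]
        simp only [Matrix.mul_assoc]

/-- The spin-generalized (rank `r`) version of the key algebraic identity:
`(I_r + AᵀŹ⁻¹X̃⁻¹B)·(I_r + AᵀX̃⁻¹Z̃⁻¹B) = I_r + AᵀŹ⁻¹·((w+z+2xy')·X̃⁻¹ − 2y'·I_N − X̃⁻²)·Z̃⁻¹B`. -/
theorem spin_rank_r_product_identity {N r : ℕ} (hN : 0 < N) (hr : 0 < r)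
    (X Z : Matrix (Fin N) (Fin N) ℂ) (A B : Matrix (Fin N) (Fin r) ℂ)
    (hrank : X * Z - Z * X - 1 = B * Aᵀ)
    (x y y' w z : ℂ)
    (hX : IsUnit (x • (1 : Matrix (Fin N) (Fin N) ℂ) + (2 * y) • Z - X))
    (hZt : IsUnit (z • (1 : Matrix (Fin N) (Fin N) ℂ) - Z))
    (hZa : IsUnit (w • (1 : Matrix (Fin N) (Fin N) ℂ) + (1 - 4 * y * y') • Z + (2 * y') • X)) :
    ((1 : Matrix (Fin r) (Fin r) ℂ)
        + Aᵀ * (w • (1 : Matrix (Fin N) (Fin N) ℂ) + (1 - 4 * y * y') • Z + (2 * y') • X)⁻¹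
            * (x • (1 : Matrix (Fin N) (Fin N) ℂ) + (2 * y) • Z - X)⁻¹ * B) *
    ((1 : Matrix (Fin r) (Fin r) ℂ)
        + Aᵀ * (x • (1 : Matrix (Fin N) (Fin N) ℂ) + (2 * y) • Z - X)⁻¹
            * (z • (1 : Matrix (Fin N) (Fin N) ℂ) - Z)⁻¹ * B)
    = (1 : Matrix (Fin r) (Fin r) ℂ)
        + Aᵀ * (w • (1 : Matrix (Fin N) (Fin N) ℂ) + (1 - 4 * y * y') • Z + (2 * y') • X)⁻¹
            * ((w + z + 2 * x * y') • (x • (1 : Matrix (Fin N) (Fin N) ℂ) + (2 * y) • Z - X)⁻¹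
                - (2 * y') • (1 : Matrix (Fin N) (Fin N) ℂ)
                - (x • (1 : Matrix (Fin N) (Fin N) ℂ) + (2 * y) • Z - X)⁻¹
                  * (x • (1 : Matrix (Fin N) (Fin N) ℂ) + (2 * y) • Z - X)⁻¹)
            * (z • (1 : Matrix (Fin N) (Fin N) ℂ) - Z)⁻¹ * B :=
  spin_rank_r_product_identity_general X Z A B hrank x y y' w z hX hZt hZa
end

section
/- Let r be a positive integer, and let A and B be N×r complex matrices satisfying the rank-r condition X·Z − Z·X − I_N = B·Aᵀ. Fix complex numbers w, z such that wI − X and zI − Z are invertible, and suppose xI − X − Z is invertible for every real x. Then the r×r matrix-valued integral ∫_{-∞}^{∞} exp(x(w+z) − (w²+z²)/2 − x²/2) · (I_r + Aᵀ(wI−X)⁻¹(xI−X−Z)⁻¹B) · (I_r + Aᵀ(xI−X−Z)⁻¹(zI−Z)⁻¹B) dx (taken entrywise) equals √(2π)·exp(wz)·(I_r + Aᵀ(wI−X)⁻¹(zI−Z)⁻¹B). That is, ∫_{-∞}^{∞} ψ_{𝒳^♭}(x,−1/2,w)ᵀ·ψ_𝒳(x,−1/2,z)·e^{−x²/2} dx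 = √(2π)·ψ_𝒳(w,0,z). -/
open Matrix MeasureTheory Filter Complex Topology

section Aux
variable {N : ℕ}
attribute [local instance] Matrix.linftyOpNormedAddCommGroup Matrix.linftyOpNormedRing
  Matrix.linftyOpNormedAlgebra

noncomputable local instance : UniformSpace (Matrix (Fin N) (Fin N) ℂ) :=
  (Matrix.linftyOpNormedAddCommGroup : NormedAddCommGroup (Matrix (Fin N) (Fin N) ℂ)).toUniformSpace

noncomputable local instance : TopologicalSpace (Matrix (Fin N) (Fin N) ℂ) :=
  (Matrix.linftyOpNormedAddCommGroup : NormedAddCommGroup (Matrix (Fin N) (Fin N) ℂ)).toUniformSpace.toTopologicalSpace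

noncomputable local instance : CompleteSpace (Matrix (Fin N) (Fin N) ℂ) :=
  FiniteDimensional.complete ℂ _

variable (X Z : Matrix (Fin N) (Fin N) ℂ)

lemma hasDerivAt_affine (x : ℝ) :
    HasDerivAt (fun t : ℝ => (t : ℂ) • (1 : Matrix (Fin N) (Fin N) ℂ) - X - Z)
      (1 : Matrix (Fin N) (Fin N) ℂ) x := by
  have h1 : HasDerivAt (fun t : ℝ => (t : ℂ)) 1 x := Complex.ofRealCLM.hasDerivAt
  have h2 := (h1.smul_const (1 : Matrix (Fin N) (Fin N) ℂ))
  simpa only [one_smul] using (h2.sub_const X).sub_const Z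

lemma hasDerivAt_invS (hXZ : ∀ x : ℝ, IsUnit ((x : ℂ) • (1 : Matrix (Fin N) (Fin N) ℂ) - X - Z))
    (x : ℝ) :
    HasDerivAt (fun t : ℝ => ((t : ℂ) • (1 : Matrix (Fin N) (Fin N) ℂ) - X - Z)⁻¹)
      (-(((x : ℂ) • (1 : Matrix (Fin N) (Fin N) ℂ) - X - Z)⁻¹ *
          ((x : ℂ) • (1 : Matrix (Fin N) (Fin N) ℂ) - X - Z)⁻¹)) x := by
  have hu := hXZ x
  have hinv : HasFDerivAt (Ring.inverse : Matrix (Fin N) (Fin N) ℂ → Matrix (Fin N) (Fin N) ℂ)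
      (-ContinuousLinearMap.mulLeftRight ℂ _ ↑hu.unit⁻¹ ↑hu.unit⁻¹)
      ((x : ℂ) • (1 : Matrix (Fin N) (Fin N) ℂ) - X - Z) := by
    have := hasFDerivAt_ringInverse (𝕜 := ℂ) hu.unit
    rwa [hu.unit_spec] at this
  have hcomp := (hinv.restrictScalars ℝ).comp_hasDerivAt x (hasDerivAt_affine X Z x)
  have hfun : (Ring.inverse ∘ fun t : ℝ => (t : ℂ) • (1 : Matrix (Fin N) (Fin N) ℂ) - X - Z)
      = fun t : ℝ => ((t : ℂ) • (1 : Matrix (Fin N) (Fin N) ℂ) - X - Z)⁻¹ := by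
    funext t; simp [Function.comp, Matrix.nonsing_inv_eq_ringInverse]
  rw [hfun] at hcomp
  refine hcomp.congr_deriv ?_
  have : (↑hu.unit⁻¹ : Matrix (Fin N) (Fin N) ℂ)
      = ((x : ℂ) • (1 : Matrix (Fin N) (Fin N) ℂ) - X - Z)⁻¹ := by
    rw [Matrix.nonsing_inv_eq_ringInverse, ← Ring.inverse_unit hu.unit, hu.unit_spec]
  simp [this]

lemma norm_invS_bound (hN : 0 < N)
    (hXZ : ∀ x : ℝ, IsUnit ((x : ℂ) • (1 : Matrix (Fin N) (Fin N) ℂ) - X - Z)) :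
    ∃ K : ℝ, 0 ≤ K ∧
      ∀ x : ℝ, ‖((x : ℂ) • (1 : Matrix (Fin N) (Fin N) ℂ) - X - Z)⁻¹‖ ≤ K := by
  haveI : Nonempty (Fin N) := Fin.pos_iff_nonempty.mp hN
  set G : ℝ → Matrix (Fin N) (Fin N) ℂ :=
    fun x => ((x : ℂ) • (1 : Matrix (Fin N) (Fin N) ℂ) - X - Z)⁻¹ with hG
  have hcont : Continuous G :=
    continuous_iff_continuousAt.mpr fun x => (hasDerivAt_invS X Z hXZ x).continuousAt
  set R0 : ℝ := max 1 (2 * ‖X + Z‖) with hR0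
  have hR0nn : 0 ≤ R0 := le_trans zero_le_one (le_max_left _ _)
  -- tail bound
  have key : ∀ x : ℝ, R0 ≤ |x| → ‖G x‖ ≤ 2 := by
    intro x hx
    have hx1 : (1 : ℝ) ≤ |x| := le_trans (le_max_left _ _) hx
    have hx2 : 2 * ‖X + Z‖ ≤ |x| := le_trans (le_max_right _ _) hx
    have hxpos : (0 : ℝ) < |x| := lt_of_lt_of_le one_pos hx1
    have hx0 : (x : ℂ) ≠ 0 := by
      simp only [ne_eq, Complex.ofReal_eq_zero]
      intro h; rw [h] at hxpos; simp at hxpos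
    set t : Matrix (Fin N) (Fin N) ℂ := (x : ℂ)⁻¹ • (X + Z) with ht
    have hnt : ‖t‖ ≤ 1 / 2 := by
      rw [ht, norm_smul, norm_inv, Complex.norm_real, Real.norm_eq_abs]
      have h1 : ‖X + Z‖ ≤ |x| / 2 := by linarith
      calc |x|⁻¹ * ‖X + Z‖ ≤ |x|⁻¹ * (|x| / 2) := by
            apply mul_le_mul_of_nonneg_left h1 (by positivity)
        _ = 1 / 2 := by field_simp
    have hlt : ‖t‖ < 1 := lt_of_le_of_lt hnt (by norm_num)
    have hfact : (x : ℂ) • (1 : Matrix (Fin N) (Fin N) ℂ) - X - Z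
        = (x : ℂ) • ((1 : Matrix (Fin N) (Fin N) ℂ) - t) := by
      rw [ht, smul_sub, smul_smul, mul_inv_cancel₀ hx0, one_smul]
      abel
    have hdet : IsUnit ((1 : Matrix (Fin N) (Fin N) ℂ) - t).det :=
      (Matrix.isUnit_iff_isUnit_det _).mp (Units.oneSub t hlt).isUnit
    have hinv_eq : G x = (x : ℂ)⁻¹ • ((1 : Matrix (Fin N) (Fin N) ℂ) - t)⁻¹ := by
      rw [hG]; simp only []
      rw [hfact]
      have := Matrix.inv_smul' (A := (1 : Matrix (Fin N) (Fin N) ℂ) - t) (Units.mk0 (x : ℂ) hx0) hdet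
      simpa [Units.smul_def] using this
    have hnorm1 : ‖((1 : Matrix (Fin N) (Fin N) ℂ) - t)⁻¹‖ ≤ 2 := by
      rw [Matrix.nonsing_inv_eq_ringInverse, NormedRing.inverse_one_sub t hlt]
      have h2 : (↑(Units.oneSub t hlt)⁻¹ : Matrix (Fin N) (Fin N) ℂ) = ∑' n : ℕ, t ^ n := rfl
      rw [h2]
      have := tsum_geometric_le_of_norm_lt_one t hlt
      rw [norm_one] at this
      have h3 : (1 - ‖t‖)⁻¹ ≤ 2 := by
        have h5 : (0 : ℝ) < 1 - ‖t‖ := by linarith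
        rw [inv_le_comm₀ h5 (by norm_num : (0:ℝ) < 2)]
        norm_num; linarith
      linarith
    rw [hinv_eq, norm_smul, norm_inv, Complex.norm_real, Real.norm_eq_abs]
    have : |x|⁻¹ ≤ 1 := by
      rw [inv_le_one_iff₀]; right; exact hx1
    calc |x|⁻¹ * ‖((1 : Matrix (Fin N) (Fin N) ℂ) - t)⁻¹‖
        ≤ 1 * 2 := mul_le_mul this hnorm1 (norm_nonneg _) zero_le_one
      _ = 2 := by norm_num
  -- compact bound
  obtain ⟨K0, hK0⟩ := (isCompact_Icc (a := -R0) (b := R0)).exists_bound_of_continuousOn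
    hcont.continuousOn
  refine ⟨max K0 2, le_trans (by norm_num) (le_max_right _ _), fun x => ?_⟩
  by_cases h : |x| ≤ R0
  · exact le_trans (hK0 x (abs_le.mp h |> fun ⟨h1, h2⟩ => Set.mem_Icc.mpr ⟨h1, h2⟩))
      (le_max_left _ _)
  · exact le_trans (key x (le_of_not_ge h)) (le_max_right _ _)


section Master
variable {r : ℕ}

set_option maxHeartbeats 1000000 in
lemma master (hN : 0 < N) (X Z : Matrix (Fin N) (Fin N) ℂ)
    (A B : Matrix (Fin N) (Fin r) ℂ) (w z : ℂ)
    (hXZ : ∀ x : ℝ, IsUnit ((x : ℂ) • (1 : Matrix (Fin N) (Fin N) ℂ) - X - Z)) (i j : Fin r) :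
    ∃ (F F' : ℝ → ℂ) (K1 K2 : ℝ),
      (∀ x : ℝ, F' x = -(Complex.exp (-(((x : ℂ) - w - z) ^ 2) / 2) *
        ((Aᵀ * ((w • (1 : Matrix (Fin N) (Fin N) ℂ) - X)⁻¹
          * (((x : ℂ) - w - z) • ((x : ℂ) • (1 : Matrix (Fin N) (Fin N) ℂ) - X - Z)⁻¹
            + ((x : ℂ) • (1 : Matrix (Fin N) (Fin N) ℂ) - X - Z)⁻¹
              * ((x : ℂ) • (1 : Matrix (Fin N) (Fin N) ℂ) - X - Z)⁻¹)
          * (z • (1 : Matrix (Fin N) (Fin N) ℂ) - Z)⁻¹) * B) i j))) ∧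
      (∀ x : ℝ, HasDerivAt F (F' x) x) ∧
      Continuous F' ∧
      (∀ x : ℝ, ‖F x‖ ≤ K1 * Real.exp (-(x - (w + z).re) ^ 2 / 2)) ∧
      (∀ x : ℝ, ‖F' x‖ ≤ K2 * Real.exp (-(x - (w + z).re) ^ 2 / 4)) := by
  obtain ⟨K, hKnn, hK⟩ := norm_invS_bound X Z hN hXZ
  set G : ℝ → Matrix (Fin N) (Fin N) ℂ := fun x => ((x : ℂ) • (1 : Matrix (Fin N) (Fin N) ℂ) - X - Z)⁻¹ with hGdef
  have hGcont : Continuous G :=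
    continuous_iff_continuousAt.mpr fun x => (hasDerivAt_invS X Z hXZ x).continuousAt
  -- the entry-extraction continuous linear map
  let l : Matrix (Fin N) (Fin N) ℂ →ₗ[ℂ] ℂ :=
    { toFun := fun M => (Aᵀ * ((w • (1 : Matrix (Fin N) (Fin N) ℂ) - X)⁻¹ * M
        * (z • (1 : Matrix (Fin N) (Fin N) ℂ) - Z)⁻¹) * B) i j
      map_add' := by
        intro M M'
        simp [Matrix.mul_add, Matrix.add_mul, Matrix.add_apply]
      map_smul' := by
        intro c M
        simp [Matrix.mul_smul, Matrix.smul_mul, Matrix.smul_apply, smul_eq_mul] }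
  let L : Matrix (Fin N) (Fin N) ℂ →L[ℂ] ℂ := LinearMap.toContinuousLinearMap l
  have hLdef : ∀ M : Matrix (Fin N) (Fin N) ℂ,
      L M = (Aᵀ * ((w • (1 : Matrix (Fin N) (Fin N) ℂ) - X)⁻¹ * M
        * (z • (1 : Matrix (Fin N) (Fin N) ℂ) - Z)⁻¹) * B) i j := fun M => rfl
  set a : ℝ := (w + z).re with ha
  set b : ℝ := (w + z).im with hb
  -- the function and its derivative
  set F : ℝ → ℂ := fun x => Complex.exp (-(((x : ℂ) - w - z) ^ 2) / 2) * L (G x) with hF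
  set F' : ℝ → ℂ := fun x => -(Complex.exp (-(((x : ℂ) - w - z) ^ 2) / 2) *
      L (((x : ℂ) - w - z) • G x + G x * G x)) with hF'
  have hre : ∀ x : ℝ, ((x : ℂ) - w - z).re = x - a := by
    intro x; rw [ha]; simp [Complex.sub_re]; ring
  have him : ∀ x : ℝ, ((x : ℂ) - w - z).im = -b := by
    intro x; rw [hb]; simp [Complex.sub_im]; ring
  have hmod : ∀ x : ℝ, ‖Complex.exp (-(((x : ℂ) - w - z) ^ 2) / 2)‖
      = Real.exp (b ^ 2 / 2) * Real.exp (-(x - a) ^ 2 / 2) := by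
    intro x
    rw [Complex.norm_exp, ← Real.exp_add]
    congr 1
    have h2 : (-(((x : ℂ) - w - z) ^ 2) / 2).re
        = -(((x : ℂ) - w - z).re ^ 2 - ((x : ℂ) - w - z).im ^ 2) / 2 := by
      simp [pow_two, Complex.mul_re]
      try ring
    rw [h2, hre, him]
    ring
  have habs : ∀ x : ℝ, ‖(x : ℂ) - w - z‖ ≤ |x - a| + |b| := by
    intro x
    calc ‖(x : ℂ) - w - z‖ ≤ |((x : ℂ) - w - z).re| + |((x : ℂ) - w - z).im| :=
          Complex.norm_le_abs_re_add_abs_im _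
      _ = |x - a| + |b| := by rw [hre, him, abs_neg]
  refine ⟨F, F', Real.exp (b ^ 2 / 2) * (‖L‖ * K),
    Real.exp (b ^ 2 / 2) * ‖L‖ * (2 * K + (|b| * K + K * K)), fun x => ?_, fun x => ?_, ?_, ?_, ?_⟩
  · -- F' formula
    rw [hF']
    simp only [map_add, _root_.map_smul, smul_eq_mul, hLdef]
    try simp only [Matrix.mul_add, Matrix.add_mul, Matrix.mul_smul, Matrix.smul_mul,
      Matrix.add_apply, Matrix.smul_apply, smul_eq_mul]
    rfl
  · -- derivative
    have h0 : HasDerivAt (fun t : ℝ => ((t : ℂ) - w - z)) 1 x := by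
      have := (Complex.ofRealCLM.hasDerivAt (x := x)).sub_const (w + z)
      simpa [sub_sub] using this
    have hsq := h0.mul h0
    have hq : HasDerivAt (fun t : ℝ => -(((t : ℂ) - w - z) ^ 2) / 2) (-((x : ℂ) - w - z)) x := by
      have hfeq : (fun t : ℝ => -(((t : ℂ) - w - z) ^ 2) / 2)
          = fun t : ℝ => -((((t : ℂ) - w - z) * (((t : ℂ) - w - z)))) / 2 := by
        funext t; ring
      rw [hfeq]
      have := (hsq.neg).div_const 2
      exact this.congr_deriv (by ring)
    have hqe : HasDerivAt (fun t : ℝ => Complex.exp (-(((t : ℂ) - w - z) ^ 2) / 2))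
        (Complex.exp (-(((x : ℂ) - w - z) ^ 2) / 2) * (-((x : ℂ) - w - z))) x := hq.cexp
    have hLG : HasDerivAt (fun t : ℝ => L (G t)) (L (-(G x * G x))) x := by
      have := ((L.restrictScalars ℝ).hasFDerivAt).comp_hasDerivAt x (hasDerivAt_invS X Z hXZ x)
      exact this
    have hprod := hqe.mul hLG
    refine hprod.congr_deriv ?_
    rw [hF']
    simp only [map_add, _root_.map_smul, map_neg, smul_eq_mul]
    ring
  · -- continuity of F'
    apply Continuous.neg
    apply Continuous.mul
    · apply Complex.continuous_exp.comp
      fun_prop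
    · apply L.continuous.comp
      apply Continuous.add
      · exact ((Complex.continuous_ofReal.sub continuous_const).sub continuous_const).smul hGcont
      · exact hGcont.mul hGcont
  · -- bound on F
    intro x
    rw [hF]
    simp only [norm_mul]
    rw [hmod x]
    have h1 : ‖L (G x)‖ ≤ ‖L‖ * K := by
      calc ‖L (G x)‖ ≤ ‖L‖ * ‖G x‖ := L.le_opNorm _
        _ ≤ ‖L‖ * K := mul_le_mul_of_nonneg_left (hK x) (norm_nonneg _)
    calc Real.exp (b ^ 2 / 2) * Real.exp (-(x - a) ^ 2 / 2) * ‖L (G x)‖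
        ≤ Real.exp (b ^ 2 / 2) * Real.exp (-(x - a) ^ 2 / 2) * (‖L‖ * K) := by
          apply mul_le_mul_of_nonneg_left h1 (by positivity)
      _ = Real.exp (b ^ 2 / 2) * (‖L‖ * K) * Real.exp (-(x - a) ^ 2 / 2) := by ring
  · -- bound on F'
    intro x
    rw [hF']
    rw [norm_neg, norm_mul, hmod x]
    have hunn : (0:ℝ) ≤ |x - a| := abs_nonneg _
    have h1 : ‖L (((x : ℂ) - w - z) • G x + G x * G x)‖
        ≤ ‖L‖ * ((|x - a| + |b|) * K + K * K) := by
      calc ‖L (((x : ℂ) - w - z) • G x + G x * G x)‖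
          ≤ ‖L‖ * ‖((x : ℂ) - w - z) • G x + G x * G x‖ := L.le_opNorm _
        _ ≤ ‖L‖ * ((|x - a| + |b|) * K + K * K) := by
            apply mul_le_mul_of_nonneg_left _ (norm_nonneg L)
            calc ‖((x : ℂ) - w - z) • G x + G x * G x‖
                ≤ ‖((x : ℂ) - w - z) • G x‖ + ‖G x * G x‖ := norm_add_le _ _
              _ ≤ ‖(x : ℂ) - w - z‖ * ‖G x‖ + ‖G x‖ * ‖G x‖ := by
                  rw [norm_smul]
                  exact add_le_add le_rfl (norm_mul_le _ _)
              _ ≤ (|x - a| + |b|) * K + K * K := by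
                  apply add_le_add
                  · exact mul_le_mul (habs x) (hK x) (norm_nonneg _) (by positivity)
                  · exact mul_le_mul (hK x) (hK x) (norm_nonneg _) hKnn
    have hexp_mono : Real.exp (-(x - a) ^ 2 / 2) ≤ Real.exp (-(x - a) ^ 2 / 4) :=
      Real.exp_le_exp.mpr (by nlinarith [sq_nonneg (x - a)])
    have hu_tame : |x - a| * Real.exp (-(x - a) ^ 2 / 2) ≤ 2 * Real.exp (-(x - a) ^ 2 / 4) := by
      have hsplit : Real.exp (-(x - a) ^ 2 / 2)
          = Real.exp (-(x - a) ^ 2 / 4) * Real.exp (-(x - a) ^ 2 / 4) := by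
        rw [← Real.exp_add]; congr 1; ring
      have h2 : |x - a| * Real.exp (-(x - a) ^ 2 / 4) ≤ 2 := by
        have hx4 : Real.exp ((x - a) ^ 2 / 4) * Real.exp (-(x - a) ^ 2 / 4) = 1 := by
          rw [← Real.exp_add]
          norm_num [neg_div]
        have h5 : (x - a) ^ 2 / 4 + 1 ≤ Real.exp ((x - a) ^ 2 / 4) :=
          Real.add_one_le_exp _
        have h6 : |x - a| ≤ (x - a) ^ 2 / 4 + 1 := by
          nlinarith [_root_.sq_abs (x - a), sq_nonneg (|x - a| - 2), abs_nonneg (x - a)]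
        calc |x - a| * Real.exp (-(x - a) ^ 2 / 4)
            ≤ ((x - a) ^ 2 / 4 + 1) * Real.exp (-(x - a) ^ 2 / 4) := by
              apply mul_le_mul_of_nonneg_right h6 (Real.exp_pos _).le
          _ ≤ Real.exp ((x - a) ^ 2 / 4) * Real.exp (-(x - a) ^ 2 / 4) := by
              apply mul_le_mul_of_nonneg_right h5 (Real.exp_pos _).le
          _ = 1 := hx4
          _ ≤ 2 := by norm_num
      calc |x - a| * Real.exp (-(x - a) ^ 2 / 2)
          = (|x - a| * Real.exp (-(x - a) ^ 2 / 4)) * Real.exp (-(x - a) ^ 2 / 4) := by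
            rw [hsplit]; ring
        _ ≤ 2 * Real.exp (-(x - a) ^ 2 / 4) :=
            mul_le_mul_of_nonneg_right h2 (Real.exp_pos _).le
    have hLnn : (0:ℝ) ≤ ‖L‖ := norm_nonneg _
    calc Real.exp (b ^ 2 / 2) * Real.exp (-(x - a) ^ 2 / 2)
          * ‖L (((x : ℂ) - w - z) • G x + G x * G x)‖
        ≤ Real.exp (b ^ 2 / 2) * Real.exp (-(x - a) ^ 2 / 2)
            * (‖L‖ * ((|x - a| + |b|) * K + K * K)) := by
          apply mul_le_mul_of_nonneg_left h1 (by positivity)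
      _ = Real.exp (b ^ 2 / 2) * ‖L‖
            * (K * (|x - a| * Real.exp (-(x - a) ^ 2 / 2))
              + (|b| * K + K * K) * Real.exp (-(x - a) ^ 2 / 2)) := by ring
      _ ≤ Real.exp (b ^ 2 / 2) * ‖L‖
            * (K * (2 * Real.exp (-(x - a) ^ 2 / 4))
              + (|b| * K + K * K) * Real.exp (-(x - a) ^ 2 / 4)) := by
          apply mul_le_mul_of_nonneg_left _ (by positivity)
          apply add_le_add
          · exact mul_le_mul_of_nonneg_left hu_tame hKnn
          · apply mul_le_mul_of_nonneg_left hexp_mono (by positivity)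
      _ = Real.exp (b ^ 2 / 2) * ‖L‖ * (2 * K + (|b| * K + K * K))
            * Real.exp (-(x - a) ^ 2 / 4) := by ring

end Master
end Aux

variable {N r : ℕ}

set_option maxHeartbeats 1000000 in
lemma keyA (X Z : Matrix (Fin N) (Fin N) ℂ) (A B : Matrix (Fin N) (Fin r) ℂ)
    (hrank : X * Z - Z * X - 1 = B * Aᵀ) (w z ξ : ℂ)
    (hW : IsUnit (w • (1 : Matrix (Fin N) (Fin N) ℂ) - X))
    (hZ : IsUnit (z • (1 : Matrix (Fin N) (Fin N) ℂ) - Z))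
    (hS : IsUnit (ξ • (1 : Matrix (Fin N) (Fin N) ℂ) - X - Z)) :
    ((1 : Matrix (Fin r) (Fin r) ℂ)
        + Aᵀ * (w • (1 : Matrix (Fin N) (Fin N) ℂ) - X)⁻¹
            * (ξ • (1 : Matrix (Fin N) (Fin N) ℂ) - X - Z)⁻¹ * B) *
      ((1 : Matrix (Fin r) (Fin r) ℂ)
        + Aᵀ * (ξ • (1 : Matrix (Fin N) (Fin N) ℂ) - X - Z)⁻¹
            * (z • (1 : Matrix (Fin N) (Fin N) ℂ) - Z)⁻¹ * B)
    = ((1 : Matrix (Fin r) (Fin r) ℂ)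
        + Aᵀ * (w • (1 : Matrix (Fin N) (Fin N) ℂ) - X)⁻¹
            * (z • (1 : Matrix (Fin N) (Fin N) ℂ) - Z)⁻¹ * B)
      - Aᵀ * ((w • (1 : Matrix (Fin N) (Fin N) ℂ) - X)⁻¹
          * ((ξ - w - z) • (ξ • (1 : Matrix (Fin N) (Fin N) ℂ) - X - Z)⁻¹
            + (ξ • (1 : Matrix (Fin N) (Fin N) ℂ) - X - Z)⁻¹
              * (ξ • (1 : Matrix (Fin N) (Fin N) ℂ) - X - Z)⁻¹)
          * (z • (1 : Matrix (Fin N) (Fin N) ℂ) - Z)⁻¹) * B := by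
  set W : Matrix (Fin N) (Fin N) ℂ := w • 1 - X with hWdef
  set V : Matrix (Fin N) (Fin N) ℂ := z • 1 - Z with hVdef
  set S : Matrix (Fin N) (Fin N) ℂ := ξ • 1 - X - Z with hSdef
  have hSd : IsUnit S.det := (Matrix.isUnit_iff_isUnit_det S).mp hS
  have hWd : IsUnit W.det := (Matrix.isUnit_iff_isUnit_det W).mp hW
  have hVd : IsUnit V.det := (Matrix.isUnit_iff_isUnit_det V).mp hZ
  have hS1 : S⁻¹ * S = 1 := Matrix.nonsing_inv_mul S hSd
  have hS2 : S * S⁻¹ = 1 := Matrix.mul_nonsing_inv S hSd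
  have hW1 : W⁻¹ * W = 1 := Matrix.nonsing_inv_mul W hWd
  have hV2 : V * V⁻¹ = 1 := Matrix.mul_nonsing_inv V hVd
  set D : Matrix (Fin N) (Fin N) ℂ := (ξ - w - z) • S⁻¹ + S⁻¹ * S⁻¹ with hDdef
  -- step 1: commutator identity
  have hc : X * Z - Z * X - 1 = S * X - X * S - 1 := by
    rw [hSdef]
    simp only [sub_mul, mul_sub, Matrix.smul_mul, Matrix.mul_smul, one_mul, mul_one]
    module
  -- step 2: sandwich
  have h1 : S⁻¹ * (B * Aᵀ) * S⁻¹ = X * S⁻¹ - S⁻¹ * X - S⁻¹ * S⁻¹ := by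
    rw [← hrank, hc]
    calc S⁻¹ * (S * X - X * S - 1) * S⁻¹
        = (S⁻¹ * S) * (X * S⁻¹) - (S⁻¹ * X) * (S * S⁻¹) - S⁻¹ * S⁻¹ := by
          simp only [mul_sub, sub_mul, mul_one, one_mul, Matrix.mul_assoc]
      _ = X * S⁻¹ - S⁻¹ * X - S⁻¹ * S⁻¹ := by rw [hS1, hS2, one_mul, mul_one]
  -- step 3: core identity
  have core : S⁻¹ * V + W * S⁻¹ + S⁻¹ * (B * Aᵀ) * S⁻¹ = 1 - D := by
    rw [h1]
    have hVX : V - X = S + (z - ξ) • (1 : Matrix (Fin N) (Fin N) ℂ) := by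
      rw [hVdef, hSdef]; module
    have hWX : W + X = w • (1 : Matrix (Fin N) (Fin N) ℂ) := by
      rw [hWdef]; module
    calc S⁻¹ * V + W * S⁻¹ + (X * S⁻¹ - S⁻¹ * X - S⁻¹ * S⁻¹)
        = S⁻¹ * (V - X) + (W + X) * S⁻¹ - S⁻¹ * S⁻¹ := by
          simp only [mul_sub, add_mul, mul_add]; abel
      _ = S⁻¹ * S + (z - ξ) • S⁻¹ + w • S⁻¹ - S⁻¹ * S⁻¹ := by
          rw [hVX, hWX]
          simp only [mul_add, Matrix.mul_smul, Matrix.smul_mul, mul_one, one_mul]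
      _ = 1 - D := by rw [hS1, hDdef]; module
  -- step 4: conjugated identity
  have E : W⁻¹ * S⁻¹ + S⁻¹ * V⁻¹ + W⁻¹ * S⁻¹ * (B * Aᵀ) * (S⁻¹ * V⁻¹)
      = W⁻¹ * V⁻¹ - W⁻¹ * D * V⁻¹ := by
    calc W⁻¹ * S⁻¹ + S⁻¹ * V⁻¹ + W⁻¹ * S⁻¹ * (B * Aᵀ) * (S⁻¹ * V⁻¹)
        = W⁻¹ * (S⁻¹ * V) * V⁻¹ + W⁻¹ * (W * S⁻¹) * V⁻¹
            + W⁻¹ * (S⁻¹ * (B * Aᵀ) * S⁻¹) * V⁻¹ := by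
          rw [Matrix.mul_assoc W⁻¹ (S⁻¹ * V) V⁻¹, Matrix.mul_assoc S⁻¹ V V⁻¹, hV2, mul_one,
            ← Matrix.mul_assoc W⁻¹ W S⁻¹, hW1, one_mul]
          simp only [Matrix.mul_assoc]
      _ = W⁻¹ * (S⁻¹ * V + W * S⁻¹ + S⁻¹ * (B * Aᵀ) * S⁻¹) * V⁻¹ := by
          simp only [mul_add, add_mul]
      _ = W⁻¹ * (1 - D) * V⁻¹ := by rw [core]
      _ = W⁻¹ * V⁻¹ - W⁻¹ * D * V⁻¹ := by
          simp only [mul_sub, sub_mul, mul_one, one_mul]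
  -- final assembly
  have expand : ((1 : Matrix (Fin r) (Fin r) ℂ) + Aᵀ * W⁻¹ * S⁻¹ * B) *
      (1 + Aᵀ * S⁻¹ * V⁻¹ * B)
      = 1 + Aᵀ * (W⁻¹ * S⁻¹ + S⁻¹ * V⁻¹ + W⁻¹ * S⁻¹ * (B * Aᵀ) * (S⁻¹ * V⁻¹)) * B := by
    simp only [Matrix.mul_add, Matrix.add_mul, Matrix.one_mul, Matrix.mul_one, Matrix.mul_assoc]
    abel
  rw [expand, E]
  simp only [Matrix.sub_mul, Matrix.mul_sub, Matrix.add_mul, Matrix.mul_add, Matrix.mul_assoc]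
  abel
/-- The spin-generalized (rank `r`) Hermite product formula, entrywise:
`∫ ψ_{𝒳^♭}(x,−1/2,w)ᵀ·ψ_𝒳(x,−1/2,z)·e^{−x²/2} dx = √(2π)·ψ_𝒳(w,0,z)`. -/
theorem spin_hermite_product_formula {N r : ℕ} (hN : 0 < N) (hr : 0 < r)
    (X Z : Matrix (Fin N) (Fin N) ℂ) (A B : Matrix (Fin N) (Fin r) ℂ)
    (hrank : X * Z - Z * X - 1 = B * Aᵀ)
    (w z : ℂ)
    (hW : IsUnit (w • (1 : Matrix (Fin N) (Fin N) ℂ) - X))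
    (hZ : IsUnit (z • (1 : Matrix (Fin N) (Fin N) ℂ) - Z))
    (hXZ : ∀ x : ℝ, IsUnit ((x : ℂ) • (1 : Matrix (Fin N) (Fin N) ℂ) - X - Z)) :
    ∀ i j : Fin r,
      (∫ x : ℝ,
        (Complex.exp ((x : ℂ) * (w + z) - (w ^ 2 + z ^ 2) / 2 - (x : ℂ) ^ 2 / 2) •
          (((1 : Matrix (Fin r) (Fin r) ℂ)
              + Aᵀ * (w • (1 : Matrix (Fin N) (Fin N) ℂ) - X)⁻¹
                  * ((x : ℂ) • (1 : Matrix (Fin N) (Fin N) ℂ) - X - Z)⁻¹ * B) *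
            ((1 : Matrix (Fin r) (Fin r) ℂ)
              + Aᵀ * ((x : ℂ) • (1 : Matrix (Fin N) (Fin N) ℂ) - X - Z)⁻¹
                  * (z • (1 : Matrix (Fin N) (Fin N) ℂ) - Z)⁻¹ * B))) i j)
      = ((Real.sqrt (2 * Real.pi) : ℂ) * Complex.exp (w * z)) •
          ((1 : Matrix (Fin r) (Fin r) ℂ)
            + Aᵀ * (w • (1 : Matrix (Fin N) (Fin N) ℂ) - X)⁻¹
                * (z • (1 : Matrix (Fin N) (Fin N) ℂ) - Z)⁻¹ * B) i j := by
  intro i j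
  obtain ⟨F, F', K1, K2, hF'eq, hFderiv, hF'cont, hFb, hF'b⟩ := master hN X Z A B w z hXZ i j
  set a : ℝ := (w + z).re with ha
  set Qij : ℂ := ((1 : Matrix (Fin r) (Fin r) ℂ)
      + Aᵀ * (w • (1 : Matrix (Fin N) (Fin N) ℂ) - X)⁻¹
          * (z • (1 : Matrix (Fin N) (Fin N) ℂ) - Z)⁻¹ * B) i j with hQij
  -- integrability of the pure Gaussian factor
  have hQint : Integrable (fun x : ℝ => Complex.exp (-(((x : ℂ) - w - z) ^ 2) / 2)) := by
    have h1 : (fun x : ℝ => Complex.exp (-(((x : ℂ) - w - z) ^ 2) / 2))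
        = fun x : ℝ => Complex.exp (-(((1/2 : ℝ) : ℂ)) * (x : ℂ) ^ 2 + (w + z) * (x : ℂ)
            + (-((w + z) ^ 2) / 2)) := by
      funext x; congr 1; push_cast; ring
    rw [h1]
    exact integrable_cexp_quadratic (by simp) _ _
  -- integrable dominating function for F'
  have hbint : Integrable (fun x : ℝ => K2 * Real.exp (-(x - a) ^ 2 / 4)) := by
    have h3 := (integrable_cexp_quadratic (b := ((1/4 : ℝ) : ℂ)) (by simp)
      (((a/2 : ℝ) : ℂ)) ((-(a^2)/4 : ℝ) : ℂ)).norm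
    have h4 : (fun x : ℝ => Real.exp (-(x - a) ^ 2 / 4))
        = fun x : ℝ => ‖Complex.exp (-(((1/4 : ℝ) : ℂ)) * (x:ℂ)^2 + ((a/2 : ℝ) : ℂ) * (x:ℂ)
            + ((-(a^2)/4 : ℝ) : ℂ))‖ := by
      funext x
      rw [Complex.norm_exp]
      have : (-(((1/4 : ℝ) : ℂ)) * (x:ℂ)^2 + ((a/2 : ℝ) : ℂ) * (x:ℂ) + ((-(a^2)/4 : ℝ) : ℂ))
          = (((-(1/4) * x^2 + (a/2) * x + (-(a^2)/4) : ℝ)) : ℂ) := by push_cast; ring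
      rw [this, Complex.ofReal_re]
      congr 1; ring
    rw [show (fun x : ℝ => K2 * Real.exp (-(x - a) ^ 2 / 4))
        = fun x : ℝ => K2 * (fun x : ℝ => Real.exp (-(x - a) ^ 2 / 4)) x from rfl, h4]
    exact h3.const_mul K2
  have hF'int : Integrable F' := by
    exact hbint.mono' hF'cont.aestronglyMeasurable (ae_of_all _ fun x => hF'b x)
  -- limits of F at ±∞
  have htends : ∀ l : Filter ℝ, Tendsto (fun x : ℝ => (x - a) ^ 2) l atTop →
      Tendsto F l (𝓝 0) := by
    intro l hl
    apply squeeze_zero_norm hFb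
    have h5 : Tendsto (fun x : ℝ => -(x - a) ^ 2 / 2) l atBot := by
      apply Filter.Tendsto.atBot_div_const (by norm_num : (0:ℝ) < 2)
      exact tendsto_neg_atTop_atBot.comp hl
    have h6 := Real.tendsto_exp_atBot.comp h5
    have h7 : Tendsto (fun x : ℝ => K1 * Real.exp (-(x - a) ^ 2 / 2)) l (𝓝 (K1 * 0)) :=
      (h6.const_mul K1)
    simpa using h7
  have htop : Tendsto F atTop (𝓝 0) := by
    apply htends
    have h8 : Tendsto (fun x : ℝ => x - a) atTop atTop :=
      tendsto_atTop_add_const_right atTop (-a) tendsto_id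
    have := (tendsto_pow_atTop (two_ne_zero)).comp h8
    exact this
  have hbot : Tendsto F atBot (𝓝 0) := by
    apply htends
    have h8 : Tendsto (fun x : ℝ => -(x - a)) atBot atTop := by
      have h9 : Tendsto (fun x : ℝ => x - a) atBot atBot :=
        tendsto_atBot_add_const_right atBot (-a) tendsto_id
      exact tendsto_neg_atBot_atTop.comp h9
    have := (tendsto_pow_atTop (two_ne_zero)).comp h8
    have h10 : (fun x : ℝ => (fun y : ℝ => y ^ 2) (-(x - a))) = fun x : ℝ => (x - a) ^ 2 := by
      funext x; ring
    rw [show ((fun y : ℝ => y ^ 2) ∘ fun x : ℝ => -(x - a)) = fun x : ℝ => (x - a) ^ 2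
      from h10] at this
    exact this
  have hzero : (∫ x : ℝ, F' x) = 0 := by
    have := integral_of_hasDerivAt_of_tendsto hFderiv hF'int hbot htop
    simpa using this
  -- the Gaussian integral value
  have hgauss : (∫ x : ℝ, Complex.exp (-(((x : ℂ) - w - z) ^ 2) / 2))
      = ((Real.sqrt (2 * Real.pi) : ℝ) : ℂ) := by
    have h1 : (fun x : ℝ => Complex.exp (-(((x : ℂ) - w - z) ^ 2) / 2))
        = fun x : ℝ => Complex.exp ((-((1/2 : ℝ) : ℂ)) * (x : ℂ) ^ 2 + (w + z) * (x : ℂ)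
            + (-((w + z) ^ 2) / 2)) := by
      funext x; congr 1; push_cast; ring
    rw [h1, integral_cexp_quadratic (by simp) _ _]
    have h2 : (-((w + z) ^ 2) / 2 - (w + z) ^ 2 / (4 * -((1/2 : ℝ) : ℂ))) = 0 := by
      push_cast; ring
    rw [h2, Complex.exp_zero, mul_one]
    have h3 : ((Real.pi : ℂ) / -(-((1/2 : ℝ) : ℂ))) = ((2 * Real.pi : ℝ) : ℂ) := by
      push_cast; ring
    rw [h3]
    have h4 : ((2 * Real.pi : ℝ) : ℂ) ^ (1/2 : ℂ) = ((Real.sqrt (2 * Real.pi) : ℝ) : ℂ) := by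
      rw [show (1/2 : ℂ) = ((1/2 : ℝ) : ℂ) by norm_num,
        ← Complex.ofReal_cpow (by positivity), Real.sqrt_eq_rpow]
    rw [h4]
  -- pointwise rewriting of the integrand
  have hEq : (fun x : ℝ =>
        (Complex.exp ((x : ℂ) * (w + z) - (w ^ 2 + z ^ 2) / 2 - (x : ℂ) ^ 2 / 2) •
          (((1 : Matrix (Fin r) (Fin r) ℂ)
              + Aᵀ * (w • (1 : Matrix (Fin N) (Fin N) ℂ) - X)⁻¹
                  * ((x : ℂ) • (1 : Matrix (Fin N) (Fin N) ℂ) - X - Z)⁻¹ * B) *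
            ((1 : Matrix (Fin r) (Fin r) ℂ)
              + Aᵀ * ((x : ℂ) • (1 : Matrix (Fin N) (Fin N) ℂ) - X - Z)⁻¹
                  * (z • (1 : Matrix (Fin N) (Fin N) ℂ) - Z)⁻¹ * B))) i j)
      = fun x : ℝ => Complex.exp (w * z) * (Complex.exp (-(((x : ℂ) - w - z) ^ 2) / 2) * Qij)
          + Complex.exp (w * z) * F' x := by
    funext x
    have hkey := keyA X Z A B hrank w z (x : ℂ) hW hZ (hXZ x)
    rw [Matrix.smul_apply, hkey, hF'eq x]
    simp only [Matrix.sub_apply, smul_eq_mul, hQij]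
    have hexp : Complex.exp ((x : ℂ) * (w + z) - (w ^ 2 + z ^ 2) / 2 - (x : ℂ) ^ 2 / 2)
        = Complex.exp (w * z) * Complex.exp (-(((x : ℂ) - w - z) ^ 2) / 2) := by
      rw [← Complex.exp_add]; congr 1; ring
    rw [hexp]
    ring
  rw [hEq]
  have hg1 : Integrable (fun x : ℝ =>
      Complex.exp (w * z) * (Complex.exp (-(((x : ℂ) - w - z) ^ 2) / 2) * Qij)) :=
    (hQint.mul_const Qij).const_mul _
  have hg2 : Integrable (fun x : ℝ => Complex.exp (w * z) * F' x) := hF'int.const_mul _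
  rw [integral_add hg1 hg2, integral_const_mul, integral_const_mul, integral_mul_const,
    hgauss, hzero]
  simp only [smul_eq_mul, mul_zero, add_zero]
  ring
end
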